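/- Let R be a linear term rewriting system over a signature Σ. If the encoded system R° is terminating on all finite Σ°-labeled graphs (i.e., there is no infinite sequence G_0 ⇒_{R°} G_1 ⇒_{R°} ⋯ of PBPO+ rewrite steps on finite graphs), then R is terminating on terms Ter(Σ,X). -/

import Mathlib

open CategoryTheory
open Classical

noncomputable section

/-- Labeled graphs over a label type `W`. -/
structure LGraph (W : Type) : Type 1 where
  V : Type
  E : Type
  src : E → V
  tgt : E → V
  lV : V → W
  lE : E → W

section Cat

variable {W : Type} [Preorder W]

/-- Label-nondecreasing graph premorphisms: the morphisms of the category `Graph^(L,≤)`. -/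
structure GLHom (G H : LGraph W) : Type where
  onV : G.V → H.V
  onE : G.E → H.E
  src_comm : ∀ e, H.src (onE e) = onV (G.src e)
  tgt_comm : ∀ e, H.tgt (onE e) = onV (G.tgt e)
  lV_le : ∀ v, G.lV v ≤ H.lV (onV v)
  lE_le : ∀ e, G.lE e ≤ H.lE (onE e)

theorem GLHom.ext' {G H : LGraph W} {f g : GLHom G H}
    (h1 : f.onV = g.onV) (h2 : f.onE = g.onE) : f = g := by
  cases f; cases g
  cases h1; cases h2
  rfl

/-- The category `Graph^(L,≤)` of labeled graphs over a preordered label set. -/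
instance : Category (LGraph W) where
  Hom G H := GLHom G H
  id G := { onV := id, onE := id, src_comm := fun _ => rfl, tgt_comm := fun _ => rfl,
            lV_le := fun _ => le_refl _, lE_le := fun _ => le_refl _ }
  comp f g :=
    { onV := g.onV ∘ f.onV
      onE := g.onE ∘ f.onE
      src_comm := fun e => by
        simp only [Function.comp_apply, g.src_comm, f.src_comm]
      tgt_comm := fun e => by
        simp only [Function.comp_apply, g.tgt_comm, f.tgt_comm]
      lV_le := fun v => le_trans (f.lV_le v) (g.lV_le _)
      lE_le := fun e => le_trans (f.lE_le e) (g.lE_le _) }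
  id_comp f := GLHom.ext' rfl rfl
  comp_id f := GLHom.ext' rfl rfl
  assoc f g h := GLHom.ext' rfl rfl

/-- Vertex map of a morphism. -/
abbrev homV {G H : LGraph W} (f : G ⟶ H) : G.V → H.V := GLHom.onV f

/-- Edge map of a morphism. -/
abbrev homE {G H : LGraph W} (f : G ⟶ H) : G.E → H.E := GLHom.onE f

end Cat

/-- A graph is finite if it has finitely many vertices and edges. -/
def FiniteG {W : Type} (G : LGraph W) : Prop := Finite G.V ∧ Finite G.E
/-- The flat lattice on a base label set `A`: a global minimum `⊥`, a global
maximum `⊤`, and all elements of `A` pairwise incomparable. -/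
inductive Flat (A : Type) : Type
  | bot : Flat A
  | el : A → Flat A
  | top : Flat A

namespace Flat

def le {A : Type} : Flat A → Flat A → Prop
  | bot, _ => True
  | _, top => True
  | el a, el b => a = b
  | _, _ => False

instance (A : Type) : Preorder (Flat A) where
  le := Flat.le
  le_refl a := by cases a <;> trivial
  le_trans a b c hab hbc := by
    cases a <;> cases b <;> cases c <;> simp_all [Flat.le]

theorem bot_le {A : Type} (a : Flat A) : (Flat.bot : Flat A) ≤ a := by
  show Flat.le Flat.bot a
  cases a <;> trivial

theorem le_top {A : Type} (a : Flat A) : a ≤ (Flat.top : Flat A) := by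
  show Flat.le a Flat.top
  cases a <;> trivial

theorem le_cases {A : Type} {a b : Flat A} (h : a = Flat.bot ∨ b = Flat.top) : a ≤ b := by
  rcases h with h | h
  · subst h; exact bot_le _
  · subst h; exact le_top _

end Flat

/-- The flat lattice `Σ°` induced by a signature `S` together with the
positive natural numbers (used as edge labels). -/
abbrev FlatL (S : Type) := Flat (S ⊕ ℕ+)
/-- First-order terms over a signature `S` with arity function `ar` and
variable set `X`. -/
inductive Term (S : Type) (ar : S → ℕ) (X : Type) : Type
  | var : X → Term S ar X
  | app : (f : S) → (Fin (ar f) → Term S ar X) → Term S ar X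

namespace Term

variable {S : Type} {ar : S → ℕ} {X : Type}

/-- The subterm of `t` at a position (a list of (0-based) child indices),
if the position exists in `t`. -/
def sub? : Term S ar X → List ℕ → Option (Term S ar X)
  | t, [] => some t
  | .var _, _ :: _ => none
  | .app f ts, i :: p => if h : i < ar f then sub? (ts ⟨i, h⟩) p else none

/-- The set of variables occurring in a term. -/
def vars (t : Term S ar X) : Set X := {x | ∃ p, t.sub? p = some (.var x)}

/-- A term is linear if every variable occurs at most once in it. -/
def Linear (t : Term S ar X) : Prop :=
  ∀ x p q, t.sub? p = some (.var x) → t.sub? q = some (.var x) → p = q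

/-- The head symbol of a term, if any. -/
def head? : Term S ar X → Option S
  | .var _ => none
  | .app f _ => some f

/-- The function symbol at position `p` of `t`, if any. -/
def symAt (t : Term S ar X) (p : List ℕ) : Option S := (t.sub? p).bind head?

theorem sub?_append (t : Term S ar X) (p q : List ℕ) :
    t.sub? (p ++ q) = (t.sub? p).bind (fun s => s.sub? q) := by
  induction p generalizing t with
  | nil => simp [sub?]
  | cons i p ih =>
    cases t with
    | var x => simp [sub?]
    | app f ts =>
      show sub? (.app f ts) (i :: (p ++ q)) = _
      simp only [sub?]
      by_cases h : i < ar f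
      · simp [h, ih]
      · simp [h]

theorem symAt_sub (t : Term S ar X) {p : List ℕ} {f : S} (h : t.symAt p = some f) :
    ∃ ts : Fin (ar f) → Term S ar X, t.sub? p = some (.app f ts) := by
  unfold symAt at h
  cases hs : t.sub? p with
  | none => rw [hs] at h; simp at h
  | some s =>
    rw [hs] at h
    cases s with
    | var x => simp [head?] at h
    | app g ts =>
      simp [head?] at h
      subst h
      exact ⟨ts, rfl⟩

theorem edge_sub?_isSome (t : Term S ar X) {p : List ℕ} {i : ℕ}
    (h : ∃ f, t.symAt p = some f ∧ i < ar f) :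
    ∃ s, t.sub? (p ++ [i]) = some s := by
  obtain ⟨f, hf, hi⟩ := h
  obtain ⟨ts, hts⟩ := t.symAt_sub hf
  refine ⟨ts ⟨i, hi⟩, ?_⟩
  rw [sub?_append, hts]
  simp [sub?, hi]

theorem edge_tgt_var (t : Term S ar X) {p : List ℕ} {i : ℕ}
    (h : ∃ f, t.symAt p = some f ∧ i < ar f)
    (hn : ¬ (t.symAt (p ++ [i])).isSome) :
    ∃ x, t.sub? (p ++ [i]) = some (.var x) := by
  obtain ⟨s, hs⟩ := t.edge_sub?_isSome h
  cases s with
  | var x => exact ⟨x, hs⟩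
  | app g ts => exact absurd (by simp [symAt, hs, head?]) hn

theorem root_var (t : Term S ar X) (h : ¬ (t.symAt []).isSome) :
    ∃ x, t.sub? [] = some (.var x) := by
  cases t with
  | var x => exact ⟨x, rfl⟩
  | app f ts => exact absurd (by simp [symAt, sub?, head?]) h

/-- Vertices of the term encoding: symbol vertices (named by their position)
and variable heads (named by their variable). -/
def encV (t : Term S ar X) : Type :=
  {p : List ℕ // (t.symAt p).isSome} ⊕ {x : X // x ∈ t.vars}

/-- Edges of the term encoding: pairs of a symbol position and a child index. -/
def encE (t : Term S ar X) : Type :=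
  {pi : List ℕ × ℕ // ∃ f, t.symAt pi.1 = some f ∧ pi.2 < ar f}

/-- Target of an edge of the term encoding. -/
noncomputable def encTgt (t : Term S ar X) (e : t.encE) : t.encV :=
  if h : (t.symAt (e.1.1 ++ [e.1.2])).isSome then Sum.inl ⟨e.1.1 ++ [e.1.2], h⟩
  else Sum.inr ⟨Classical.choose (t.edge_tgt_var e.2 h),
    ⟨e.1.1 ++ [e.1.2], Classical.choose_spec (t.edge_tgt_var e.2 h)⟩⟩

/-- The term encoding `t°` of a term `t` as a `Σ°`-labeled graph. -/
noncomputable def enc (t : Term S ar X) : LGraph (FlatL S) where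
  V := t.encV
  E := t.encE
  src e := Sum.inl ⟨e.1.1, by obtain ⟨f, hf, _⟩ := e.2; simp [hf]⟩
  tgt := t.encTgt
  lV v := match v with
    | .inl q => (t.symAt q.1).elim Flat.bot (fun f => Flat.el (Sum.inl f))
    | .inr _ => Flat.bot
  lE e := Flat.el (Sum.inr ⟨e.1.2 + 1, Nat.succ_pos _⟩)

/-- The root of the term encoding (the vertex at position `ε`). -/
noncomputable def encRoot (t : Term S ar X) : t.encV :=
  if h : (t.symAt []).isSome then Sum.inl ⟨[], h⟩
  else Sum.inr ⟨Classical.choose (t.root_var h), ⟨[], Classical.choose_spec (t.root_var h)⟩⟩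

/-- `t.encVertAt p v` says that `v` is the vertex at position `p` in the term
encoding `t°`. -/
def encVertAt (t : Term S ar X) (p : List ℕ) : t.encV → Prop
  | .inl q => q.1 = p
  | .inr x => t.sub? p = some (.var x.1)

/-- The set of variable heads of a term encoding. -/
def varHeads (t : Term S ar X) : Set t.encV := Set.range Sum.inr

/-- Applying a substitution to a term. -/
def subst (σ : X → Term S ar X) : Term S ar X → Term S ar X
  | .var x => σ x
  | .app f ts => .app f (fun i => subst σ (ts i))

end Term

/-- One-hole contexts over a signature. `app f i ts C` is the context
`f(ts 0, …, C, …, ts (n-1))` with `C` at argument position `i`. -/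
inductive Ctx (S : Type) (ar : S → ℕ) (X : Type) : Type
  | hole : Ctx S ar X
  | app : (f : S) → (i : Fin (ar f)) → (Fin (ar f) → Term S ar X) → Ctx S ar X → Ctx S ar X

namespace Ctx

variable {S : Type} {ar : S → ℕ} {X : Type}

/-- Replacing the hole of a context by a term. -/
def fill : Ctx S ar X → Term S ar X → Term S ar X
  | .hole, t => t
  | .app f i ts C, t => .app f (Function.update ts i (C.fill t))

/-- The position of the hole of a context. -/
def holePos : Ctx S ar X → List ℕ
  | .hole => []
  | .app _ i _ C => (i : ℕ) :: C.holePos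

end Ctx

/-- A term rewrite rule `lhs → rhs`: `lhs` is not a variable and all variables
of `rhs` occur in `lhs`. -/
structure TRSRule (S : Type) (ar : S → ℕ) (X : Type) : Type where
  lhs : Term S ar X
  rhs : Term S ar X
  lhs_not_var : ∀ x, lhs ≠ Term.var x
  var_cond : rhs.vars ⊆ lhs.vars

namespace TRSRule

variable {S : Type} {ar : S → ℕ} {X : Type}

/-- A rule is linear if both sides are linear terms. -/
def Linear (ρ : TRSRule S ar X) : Prop := ρ.lhs.Linear ∧ ρ.rhs.Linear

/-- The rewrite step relation generated by a single rule. -/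
def Step (ρ : TRSRule S ar X) (s t : Term S ar X) : Prop :=
  ∃ (C : Ctx S ar X) (σ : X → Term S ar X),
    s = C.fill (ρ.lhs.subst σ) ∧ t = C.fill (ρ.rhs.subst σ)

/-- The rewrite step relation of a rule at a fixed position `p`. -/
def StepAt (ρ : TRSRule S ar X) (p : List ℕ) (s t : Term S ar X) : Prop :=
  ∃ (C : Ctx S ar X) (σ : X → Term S ar X),
    C.holePos = p ∧ s = C.fill (ρ.lhs.subst σ) ∧ t = C.fill (ρ.rhs.subst σ)

end TRSRule

/-- The rewrite relation of a term rewriting system. -/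
def TStep {S : Type} {ar : S → ℕ} {X : Type} (Rs : Set (TRSRule S ar X))
    (s t : Term S ar X) : Prop :=
  ∃ ρ ∈ Rs, ρ.Step s t
section Closures

variable {A : Type}

/-- Upper context closure `C[G]` of a graph rooted at `r`: adds a `⊤`-labeled
context vertex with a `⊤`-labeled edge to the root and a `⊤`-labeled loop. -/
def upperCC (G : LGraph (Flat A)) (r : G.V) : LGraph (Flat A) where
  V := G.V ⊕ Unit
  E := G.E ⊕ Bool
  src e := match e with
    | .inl e => .inl (G.src e)
    | .inr _ => .inr ()
  tgt e := match e with
    | .inl e => .inl (G.tgt e)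
    | .inr true => .inl r
    | .inr false => .inr ()
  lV v := match v with
    | .inl v => G.lV v
    | .inr _ => Flat.top
  lE e := match e with
    | .inl e => G.lE e
    | .inr _ => Flat.top

/-- Lower context closure `G↓_Xs`: relabels every vertex in `Xs` to `⊤` and
adds for it a fresh `⊤`-labeled vertex `x'` with a `⊤`-labeled edge `x → x'`
and a `⊤`-labeled loop on `x'`. -/
noncomputable def lowerCC (G : LGraph (Flat A)) (Xs : Set G.V) : LGraph (Flat A) where
  V := G.V ⊕ Xs
  E := G.E ⊕ (Xs ⊕ Xs)
  src e := match e with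
    | .inl e => .inl (G.src e)
    | .inr (.inl x) => .inl x.1
    | .inr (.inr x) => .inr x
  tgt e := match e with
    | .inl e => .inl (G.tgt e)
    | .inr (.inl x) => .inr x
    | .inr (.inr x) => .inr x
  lV v := match v with
    | .inl v => if v ∈ Xs then Flat.top else G.lV v
    | .inr _ => Flat.top
  lE e := match e with
    | .inl e => G.lE e
    | .inr _ => Flat.top

/-- The context closure `C[G↓_Xs]` of a rooted graph. -/
noncomputable def ctxCC (G : LGraph (Flat A)) (r : G.V) (Xs : Set G.V) : LGraph (Flat A) :=
  upperCC (lowerCC G Xs) (Sum.inl r)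

theorem ctxCC_lV_inl (G : LGraph (Flat A)) (r : G.V) (Xs : Set G.V) (v : G.V) :
    (ctxCC G r Xs).lV (Sum.inl (Sum.inl v)) = if v ∈ Xs then Flat.top else G.lV v := rfl

/-- The typing morphism `G ↣ C[G↓_Xs]` (an inclusion). -/
noncomputable def tCC (G : LGraph (Flat A)) (r : G.V) (Xs : Set G.V) :
    GLHom G (ctxCC G r Xs) where
  onV v := Sum.inl (Sum.inl v)
  onE e := Sum.inl (Sum.inl e)
  src_comm e := rfl
  tgt_comm e := rfl
  lV_le v := by
    rw [ctxCC_lV_inl]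
    split
    · exact Flat.le_top _
    · exact le_refl _
  lE_le e := le_refl _

end Closures

/-- The interface graph `I(t)` of a term `t`: a discrete graph with
`⊥`-labeled vertices `Var(t) ∪ {ε}`. -/
def interfaceG {S : Type} {ar : S → ℕ} {X : Type} (t : Term S ar X) : LGraph (FlatL S) where
  V := {x : X // x ∈ t.vars} ⊕ Unit
  E := Empty
  src e := e.elim
  tgt e := e.elim
  lV _ := Flat.bot
  lE e := e.elim

/-- The variable vertices of an interface graph. -/
def interfaceVars {S : Type} {ar : S → ℕ} {X : Type} (t : Term S ar X) :
    Set (interfaceG t).V := Set.range Sum.inl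
/-- A PBPO⁺ rewrite rule. -/
structure PBPORule (W : Type) [Preorder W] : Type 1 where
  L : LGraph W
  K : LGraph W
  R : LGraph W
  L' : LGraph W
  K' : LGraph W
  l : K ⟶ L
  r : K ⟶ R
  l' : K' ⟶ L'
  tL : L ⟶ L'
  tK : K ⟶ K'

/-- A PBPO⁺ rewrite step `G_L ⇒_ρ^α G_R`, consisting of a monic match `m`, an
adherence morphism `α` making the match square a pullback, the pullback `G_K`
of `α` along `l'`, and the pushout `G_R` of `r` along `u`. -/
structure RewriteStep {W : Type} [Preorder W] (ρ : PBPORule W) (G₀ G₁ : LGraph W) :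
    Type 1 where
  m : ρ.L ⟶ G₀
  mono_m : Mono m
  α : G₀ ⟶ ρ.L'
  matchPB : IsPullback (𝟙 ρ.L) m ρ.tL α
  GK : LGraph W
  gL : GK ⟶ G₀
  u' : GK ⟶ ρ.K'
  pbK : IsPullback gL u' α ρ.l'
  u : ρ.K ⟶ GK
  u_u' : u ≫ u' = ρ.tK
  u_gL : u ≫ gL = ρ.l ≫ m
  w : ρ.R ⟶ G₁
  gR : GK ⟶ G₁
  po : IsPushout ρ.r u w gR

/-- `G ⇒_ρ H` : there exists a PBPO⁺ rewrite step from `G` to `H` via `ρ`. -/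
def PBPOStep {W : Type} [Preorder W] (ρ : PBPORule W) (G H : LGraph W) : Prop :=
  Nonempty (RewriteStep ρ G H)

/-- A match `m` establishes a match (of the rule `ρ`) if it is monic and some
adherence morphism makes the match square a pullback. -/
def EstablishesMatch {W : Type} [Preorder W] (ρ : PBPORule W) {G : LGraph W}
    (m : ρ.L ⟶ G) : Prop :=
  Mono m ∧ ∃ α : G ⟶ ρ.L', m ≫ α = ρ.tL ∧ IsPullback (𝟙 ρ.L) m ρ.tL α

section RuleEnc

variable {S : Type} {ar : S → ℕ} {X : Type}

/-- The morphism `l : K → L` of the rule encoding. -/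
noncomputable def encKtoL (ρ : TRSRule S ar X) : GLHom (interfaceG ρ.rhs) ρ.lhs.enc where
  onV v := match v with
    | .inl x => Sum.inr ⟨x.1, ρ.var_cond x.2⟩
    | .inr _ => ρ.lhs.encRoot
  onE e := e.elim
  src_comm e := e.elim
  tgt_comm e := e.elim
  lV_le v := by cases v <;> exact Flat.bot_le _
  lE_le e := e.elim

/-- The morphism `r : K → R` of the rule encoding. -/
noncomputable def encKtoR (ρ : TRSRule S ar X) : GLHom (interfaceG ρ.rhs) ρ.rhs.enc where
  onV v := match v with
    | .inl x => Sum.inr x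
    | .inr _ => ρ.rhs.encRoot
  onE e := e.elim
  src_comm e := e.elim
  tgt_comm e := e.elim
  lV_le v := by cases v <;> exact Flat.bot_le _
  lE_le e := e.elim

/-- Mapping the primed (lower-closure) vertices of `K'` to those of `L'`. -/
noncomputable def mapPrime (ρ : TRSRule S ar X) :
    ↥(interfaceVars ρ.rhs) → ↥(ρ.lhs.varHeads) :=
  fun x' => match x' with
  | ⟨.inl x, _⟩ => ⟨Sum.inr ⟨x.1, ρ.var_cond x.2⟩, ⟨⟨x.1, ρ.var_cond x.2⟩, rfl⟩⟩
  | ⟨.inr u, h⟩ => absurd h (by rintro ⟨y, hy⟩; cases hy)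

/-- The morphism `l' : K' → L'` of the rule encoding. -/
noncomputable def encl' (ρ : TRSRule S ar X) :
    GLHom (ctxCC (interfaceG ρ.rhs) (Sum.inr ()) (interfaceVars ρ.rhs))
      (ctxCC ρ.lhs.enc ρ.lhs.encRoot ρ.lhs.varHeads) where
  onV v := match v with
    | .inl (.inl (.inl x)) => .inl (.inl (Sum.inr ⟨x.1, ρ.var_cond x.2⟩))
    | .inl (.inl (.inr _)) => .inl (.inl ρ.lhs.encRoot)
    | .inl (.inr x') => .inl (.inr (mapPrime ρ x'))
    | .inr u => .inr u
  onE e := match e with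
    | .inl (.inl e) => e.elim
    | .inl (.inr (.inl x')) => .inl (.inr (.inl (mapPrime ρ x')))
    | .inl (.inr (.inr x')) => .inl (.inr (.inr (mapPrime ρ x')))
    | .inr b => .inr b
  src_comm := by
    rintro ((e | (⟨(x | u), hv⟩ | ⟨(x | u), hv⟩)) | b)
    · exact e.elim
    · rfl
    · exact absurd hv (by rintro ⟨y, hy⟩; cases hy)
    · rfl
    · exact absurd hv (by rintro ⟨y, hy⟩; cases hy)
    · rfl
  tgt_comm := by
    rintro ((e | (x' | x')) | b)
    · exact e.elim
    · rfl
    · rfl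
    · cases b <;> rfl
  lV_le := by
    rintro (((x | u) | x') | c)
    · refine Flat.le_cases (Or.inr ?_)
      refine (ctxCC_lV_inl ρ.lhs.enc ρ.lhs.encRoot ρ.lhs.varHeads
        (Sum.inr ⟨x.1, ρ.var_cond x.2⟩)).trans ?_
      rw [if_pos ⟨⟨x.1, ρ.var_cond x.2⟩, rfl⟩]
    · refine Flat.le_cases (Or.inl ?_)
      refine (ctxCC_lV_inl (interfaceG ρ.rhs) (Sum.inr ()) (interfaceVars ρ.rhs)
        (Sum.inr u)).trans ?_
      rw [if_neg (by rintro ⟨y, hy⟩; cases hy)]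
      rfl
    · exact Flat.le_cases (Or.inr rfl)
    · exact Flat.le_cases (Or.inr rfl)
  lE_le := by
    rintro ((e | (x' | x')) | b)
    · exact e.elim
    · exact Flat.le_cases (Or.inr rfl)
    · exact Flat.le_cases (Or.inr rfl)
    · exact Flat.le_cases (Or.inr rfl)

/-- The rule encoding `ρ°` of a term rewrite rule `ρ : l → r` as a PBPO⁺ rule. -/
noncomputable def ruleEnc (ρ : TRSRule S ar X) : PBPORule (FlatL S) where
  L := ρ.lhs.enc
  K := interfaceG ρ.rhs
  R := ρ.rhs.enc
  L' := ctxCC ρ.lhs.enc ρ.lhs.encRoot ρ.lhs.varHeads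
  K' := ctxCC (interfaceG ρ.rhs) (Sum.inr ()) (interfaceVars ρ.rhs)
  l := encKtoL ρ
  r := encKtoR ρ
  l' := encl' ρ
  tL := tCC ρ.lhs.enc ρ.lhs.encRoot ρ.lhs.varHeads
  tK := tCC (interfaceG ρ.rhs) (Sum.inr ()) (interfaceVars ρ.rhs)

/-- The rewrite relation of an encoded term rewriting system `R°`. -/
def SysStep (Rs : Set (TRSRule S ar X)) (G H : LGraph (FlatL S)) : Prop :=
  ∃ ρ ∈ Rs, PBPOStep (ruleEnc ρ) G H

end RuleEnc
section Cycles

variable {W : Type}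

/-- `IsUPath G u es v`: `es` is an undirected path from `u` to `v` in `G`. -/
def IsUPath (G : LGraph W) : G.V → List G.E → G.V → Prop
  | u, [], v => u = v
  | u, e :: es, v =>
      (G.src e = u ∧ IsUPath G (G.tgt e) es v) ∨ (G.tgt e = u ∧ IsUPath G (G.src e) es v)

/-- An undirected cycle at `v`: a nonempty undirected path from `v` to `v`
with pairwise distinct edges. -/
def IsUCycle (G : LGraph W) (v : G.V) (es : List G.E) : Prop :=
  es ≠ [] ∧ es.Nodup ∧ IsUPath G v es v

/-- A cycle edge is an edge lying on some undirected cycle. -/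
def CycleEdge (G : LGraph W) (e : G.E) : Prop :=
  ∃ v es, IsUCycle G v es ∧ e ∈ es

/-- A graph is cycle-free if it contains no undirected cycle. -/
def CycleFree (G : LGraph W) : Prop := ¬ ∃ v es, IsUCycle G v es

/-- `[G]`: the graph obtained from `G` by deleting all cycle edges. -/
def dropCycles (G : LGraph W) : LGraph W where
  V := G.V
  E := {e : G.E // ¬ CycleEdge G e}
  src e := G.src e.1
  tgt e := G.tgt e.1
  lV := G.lV
  lE e := G.lE e.1

end Cycles

section Zones

variable {S : Type}

/-- A vertex is in-well-formed if it has at most one incoming edge. -/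
def InWF (G : LGraph (FlatL S)) (v : G.V) : Prop :=
  ∀ e e' : G.E, G.tgt e = v → G.tgt e' = v → e = e'

/-- A vertex is out-well-formed if its label is a function symbol `f` and it
has exactly `ar f` outgoing edges, labeled `1, …, ar f`. -/
def OutWF (G : LGraph (FlatL S)) (ar : S → ℕ) (v : G.V) : Prop :=
  ∃ f : S, G.lV v = Flat.el (Sum.inl f) ∧
    ∃ φ : Fin (ar f) ≃ {e : G.E // G.src e = v},
      ∀ i, G.lE (φ i).1 = Flat.el (Sum.inr ⟨(i : ℕ) + 1, Nat.succ_pos _⟩)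

/-- A vertex is good if it is out-well-formed and all its children are
in-well-formed; otherwise it is bad. -/
def Good (G : LGraph (FlatL S)) (ar : S → ℕ) (v : G.V) : Prop :=
  OutWF G ar v ∧ ∀ e : G.E, G.src e = v → InWF G (G.tgt e)

/-- The edges included in a zone by the zoning algorithm are exactly the edges
with a good source. -/
def ZoneEdge (G : LGraph (FlatL S)) (ar : S → ℕ) (e : G.E) : Prop :=
  Good G ar (G.src e)

/-- One directed step along an edge included in a zone. -/
def ZStep (G : LGraph (FlatL S)) (ar : S → ℕ) (u v : G.V) : Prop :=
  ∃ e, ZoneEdge G ar e ∧ G.src e = u ∧ G.tgt e = v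

/-- Two vertices lie in the same zone iff they are connected by edges included
in zones (equivalence closure of `ZStep`). -/
def SameZone (G : LGraph (FlatL S)) (ar : S → ℕ) : G.V → G.V → Prop :=
  Relation.EqvGen (ZStep G ar)

/-- A root of a zone: a vertex with no parent inside its zone. -/
def IsZoneRoot (G : LGraph (FlatL S)) (ar : S → ℕ) (r : G.V) : Prop :=
  ¬ ∃ e, ZoneEdge G ar e ∧ G.tgt e = r

/-- A directed path along zone edges. -/
def IsZPath (G : LGraph (FlatL S)) (ar : S → ℕ) : G.V → List G.E → G.V → Prop
  | u, [], v => u = v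
  | u, e :: es, v => ZoneEdge G ar e ∧ G.src e = u ∧ IsZPath G ar (G.tgt e) es v

/-- The zone of `v₀`, as a subgraph of `G`, with every bad vertex relabeled
with `⊥`. -/
noncomputable def zoneTermGraph (G : LGraph (FlatL S)) (ar : S → ℕ) (v₀ : G.V) :
    LGraph (FlatL S) where
  V := {u : G.V // SameZone G ar u v₀}
  E := {e : G.E // ZoneEdge G ar e ∧ SameZone G ar (G.src e) v₀}
  src e := ⟨G.src e.1, e.2.2⟩
  tgt e := ⟨G.tgt e.1,
    Relation.EqvGen.trans _ _ _
      (Relation.EqvGen.symm _ _ (Relation.EqvGen.rel _ _ ⟨e.1, e.2.1, rfl, rfl⟩)) e.2.2⟩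
  lV u := if Good G ar u.1 then G.lV u.1 else Flat.bot
  lE e := G.lE e.1

end Zones

section Relabel

variable {W : Type}

/-- `G` with the label of vertex `v` changed to `l`. -/
noncomputable def relabelV (G : LGraph W) (v : G.V) (l : W) : LGraph W :=
  { G with lV := Function.update G.lV v l }

/-- `G` with the label of every vertex in `s` changed to `l`. -/
noncomputable def relabelSet (G : LGraph W) (s : Set G.V) (l : W) : LGraph W :=
  { G with lV := fun u => if u ∈ s then l else G.lV u }

end Relabel
/-!
A rewrite sequence `t₀ → t₁ → ⋯` is sent to the sequence of position graphs `tᵢ.posGraph`,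
finite trees with one vertex per position, so it suffices that each step `C[l σ] → C[r σ]` by a
linear rule is a PBPO⁺ step between the position graphs.

Every position of `C[l σ]` lies outside the redex, at a symbol of `l`, or inside the subterm
`σ x` below an occurrence of a variable `x` of `l`, and this classification is unique. The match
embeds `l°` at the hole, and the adherence sends the three kinds of positions to the context
vertex, to themselves, and to the variable head `x` or its primed copy `x'`. Pulling back along
`l'` keeps the context, the redex root and the subterms below the variables that occur in `r`.
By linearity each such variable occurs exactly once in `r`, and the pushout with `r°` moves its
subterm below that occurrence, which yields the position graph of `C[r σ]`.
-/

/-! ### Pullbacks and pushouts of labeled graphs -/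

namespace LGraph

variable {W : Type} [Preorder W]

theorem hom_ext {G H : LGraph W} {f g : G ⟶ H} (hV : ∀ v, homV f v = homV g v)
    (hE : ∀ e, homE f e = homE g e) : f = g :=
  GLHom.ext' (funext hV) (funext hE)

theorem mono_of_injective {G H : LGraph W} (f : G ⟶ H) (hV : Function.Injective (homV f))
    (hE : Function.Injective (homE f)) : Mono f :=
  ⟨fun _ _ h => hom_ext (fun v => hV (congrArg (homV · v) h))
    (fun e => hE (congrArg (homE · e) h))⟩

theorem src_homE {G H : LGraph W} (f : G ⟶ H) (e : G.E) : H.src (homE f e) = homV f (G.src e) :=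
  GLHom.src_comm f e

theorem tgt_homE {G H : LGraph W} (f : G ⟶ H) (e : G.E) : H.tgt (homE f e) = homV f (G.tgt e) :=
  GLHom.tgt_comm f e

theorem lV_le_homV {G H : LGraph W} (f : G ⟶ H) (v : G.V) : G.lV v ≤ H.lV (homV f v) :=
  GLHom.lV_le f v

theorem lE_le_homE {G H : LGraph W} (f : G ⟶ H) (e : G.E) : G.lE e ≤ H.lE (homE f e) :=
  GLHom.lE_le f e

/-- Limits in `Graph^(L,≤)` are computed on vertices and edges, with meets of labels. -/
theorem isPullback_of_components {P A B D : LGraph W} {fst : P ⟶ A} {snd : P ⟶ B}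
    {f : A ⟶ D} {g : B ⟶ D} (comm : fst ≫ f = snd ≫ g)
    (hV : ∀ a b, homV f a = homV g b → ∃! x, homV fst x = a ∧ homV snd x = b)
    (hE : ∀ a b, homE f a = homE g b → ∃! x, homE fst x = a ∧ homE snd x = b)
    (hlV : ∀ x (l : W), l ≤ A.lV (homV fst x) → l ≤ B.lV (homV snd x) → l ≤ P.lV x)
    (hlE : ∀ x (l : W), l ≤ A.lE (homE fst x) → l ≤ B.lE (homE snd x) → l ≤ P.lE x) :
    IsPullback fst snd f g := by
  have injV x y (h₁ : homV fst x = homV fst y) (h₂ : homV snd x = homV snd y) : x = y :=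
    (hV _ _ (congrArg (homV · x) comm)).unique ⟨rfl, rfl⟩ ⟨h₁.symm, h₂.symm⟩
  have injE x y (h₁ : homE fst x = homE fst y) (h₂ : homE snd x = homE snd y) : x = y :=
    (hE _ _ (congrArg (homE · x) comm)).unique ⟨rfl, rfl⟩ ⟨h₁.symm, h₂.symm⟩
  choose liftV hliftV using fun (s : Limits.PullbackCone f g) v =>
    (hV _ _ (congrArg (homV · v) s.condition)).exists
  choose liftE hliftE using fun (s : Limits.PullbackCone f g) e =>
    (hE _ _ (congrArg (homE · e) s.condition)).exists
  let lift (s : Limits.PullbackCone f g) : s.pt ⟶ P :=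
    { onV := liftV s
      onE := liftE s
      src_comm := fun e => injV _ _
        (by rw [← src_homE, (hliftE s e).1, (hliftV s _).1]; exact src_homE s.fst e)
        (by rw [← src_homE, (hliftE s e).2, (hliftV s _).2]; exact src_homE s.snd e)
      tgt_comm := fun e => injV _ _
        (by rw [← tgt_homE, (hliftE s e).1, (hliftV s _).1]; exact tgt_homE s.fst e)
        (by rw [← tgt_homE, (hliftE s e).2, (hliftV s _).2]; exact tgt_homE s.snd e)
      lV_le := fun v => hlV _ _ ((hliftV s v).1 ▸ lV_le_homV s.fst v)
        ((hliftV s v).2 ▸ lV_le_homV s.snd v)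
      lE_le := fun e => hlE _ _ ((hliftE s e).1 ▸ lE_le_homE s.fst e)
        ((hliftE s e).2 ▸ lE_le_homE s.snd e) }
  refine IsPullback.of_isLimit (c := Limits.PullbackCone.mk _ _ comm) ?_
  exact Limits.PullbackCone.IsLimit.mk comm lift
    (fun s => hom_ext (fun v => (hliftV s v).1) (fun e => (hliftE s e).1))
    (fun s => hom_ext (fun v => (hliftV s v).2) (fun e => (hliftE s e).2))
    (fun s m h₁ h₂ => hom_ext
      (fun v => injV _ _ ((congrArg (homV · v) h₁).trans (hliftV s v).1.symm)
        ((congrArg (homV · v) h₂).trans (hliftV s v).2.symm))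
      (fun e => injE _ _ ((congrArg (homE · e) h₁).trans (hliftE s e).1.symm)
        ((congrArg (homE · e) h₂).trans (hliftE s e).2.symm)))

def vertices : LGraph W ⥤ Type where
  obj G := G.V
  map f := ↾(homV f)

def edges : LGraph W ⥤ Type where
  obj G := G.E
  map f := ↾(homE f)

/-- Vertex and edge maps out of a graph covered by `w` and `g` form a morphism as soon as they
restrict to morphisms along `w` and `g`. -/
def homOfCover {R G H Z : LGraph W} {w : R ⟶ H} {g : G ⟶ H} {c₁ : R ⟶ Z} {c₂ : G ⟶ Z}
    (dV : H.V → Z.V) (dE : H.E → Z.E)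
    (hV₁ : ∀ b, dV (homV w b) = homV c₁ b) (hV₂ : ∀ c, dV (homV g c) = homV c₂ c)
    (hE₁ : ∀ b, dE (homE w b) = homE c₁ b) (hE₂ : ∀ c, dE (homE g c) = homE c₂ c)
    (hlV : ∀ x, (∃ b, homV w b = x ∧ H.lV x ≤ R.lV b) ∨
      ∃ c, homV g c = x ∧ H.lV x ≤ G.lV c)
    (hlE : ∀ x, (∃ b, homE w b = x ∧ H.lE x ≤ R.lE b) ∨
      ∃ c, homE g c = x ∧ H.lE x ≤ G.lE c) : H ⟶ Z where
  onV := dV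
  onE := dE
  src_comm x := by
    obtain ⟨b, rfl, -⟩ | ⟨c, rfl, -⟩ := hlE x
    · rw [hE₁, src_homE, src_homE, hV₁]
    · rw [hE₂, src_homE, src_homE, hV₂]
  tgt_comm x := by
    obtain ⟨b, rfl, -⟩ | ⟨c, rfl, -⟩ := hlE x
    · rw [hE₁, tgt_homE, tgt_homE, hV₁]
    · rw [hE₂, tgt_homE, tgt_homE, hV₂]
  lV_le x := by
    obtain ⟨b, rfl, hb⟩ | ⟨c, rfl, hc⟩ := hlV x
    · exact hV₁ b ▸ hb.trans (lV_le_homV c₁ b)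
    · exact hV₂ c ▸ hc.trans (lV_le_homV c₂ c)
  lE_le x := by
    obtain ⟨b, rfl, hb⟩ | ⟨c, rfl, hc⟩ := hlE x
    · exact hE₁ b ▸ hb.trans (lE_le_homE c₁ b)
    · exact hE₂ c ▸ hc.trans (lE_le_homE c₂ c)

/-- Colimits in `Graph^(L,≤)` are computed on vertices and edges; for the labels it suffices
that each one is bounded by the label of some preimage. -/
theorem isPushout_of_components {K R G H : LGraph W} {r : K ⟶ R} {u : K ⟶ G} {w : R ⟶ H}
    {g : G ⟶ H} (comm : r ≫ w = u ≫ g)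
    (hV : IsPushout (vertices.map r) (vertices.map u) (vertices.map w) (vertices.map g))
    (hE : IsPushout (edges.map r) (edges.map u) (edges.map w) (edges.map g))
    (hlV : ∀ x, (∃ b, homV w b = x ∧ H.lV x ≤ R.lV b) ∨
      ∃ c, homV g c = x ∧ H.lV x ≤ G.lV c)
    (hlE : ∀ x, (∃ b, homE w b = x ∧ H.lE x ≤ R.lE b) ∨
      ∃ c, homE g c = x ∧ H.lE x ≤ G.lE c) :
    IsPushout r u w g := by
  let descV (s : Limits.PushoutCocone r u) : H.V → s.pt.V :=
    hV.desc (↾(homV s.inl)) (↾(homV s.inr)) (by ext k; exact congrArg (homV · k) s.condition)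
  let descE (s : Limits.PushoutCocone r u) : H.E → s.pt.E :=
    hE.desc (↾(homE s.inl)) (↾(homE s.inr)) (by ext k; exact congrArg (homE · k) s.condition)
  have descV_w s b : descV s (homV w b) = homV s.inl b :=
    ConcreteCategory.congr_hom (hV.inl_desc _ _ _) b
  have descV_g s c : descV s (homV g c) = homV s.inr c :=
    ConcreteCategory.congr_hom (hV.inr_desc _ _ _) c
  have descE_w s b : descE s (homE w b) = homE s.inl b :=
    ConcreteCategory.congr_hom (hE.inl_desc _ _ _) b
  have descE_g s c : descE s (homE g c) = homE s.inr c :=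
    ConcreteCategory.congr_hom (hE.inr_desc _ _ _) c
  refine IsPushout.of_isColimit (c := Limits.PushoutCocone.mk _ _ comm) ?_
  refine Limits.PushoutCocone.IsColimit.mk comm
    (fun s => homOfCover (descV s) (descE s) (descV_w s) (descV_g s) (descE_w s) (descE_g s)
      hlV hlE)
    (fun s => hom_ext (descV_w s) (descE_w s)) (fun s => hom_ext (descV_g s) (descE_g s))
    (fun s m h₁ h₂ => hom_ext (fun x => ?_) (fun x => ?_))
  · obtain ⟨b, rfl, -⟩ | ⟨c, rfl, -⟩ := hlV x
    · exact (congrArg (homV · b) h₁).trans (descV_w s b).symm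
    · exact (congrArg (homV · c) h₂).trans (descV_g s c).symm
  · obtain ⟨b, rfl, -⟩ | ⟨c, rfl, -⟩ := hlE x
    · exact (congrArg (homE · b) h₁).trans (descE_w s b).symm
    · exact (congrArg (homE · c) h₂).trans (descE_g s c).symm

end LGraph


open CategoryTheory.Limits in
theorem Types.isPushout_ofHom_of_injective {K R G H : Type} {r : K → R} {u : K → G}
    {w : R → H} {g : G → H} (comm : ∀ k, w (r k) = g (u k)) (hu : Function.Injective u)
    (hw : Function.Injective w) (hpb : ∀ b c, w b = g c → ∃ k, r k = b ∧ u k = c)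
    (hg : ∀ c c', c ∉ Set.range u → g c = g c' → c = c')
    (hsurj : ∀ h, (∃ b, w b = h) ∨ ∃ c, g c = h) :
    IsPushout (↾r) (↾u) (↾w) (↾g) :=
  have : Mono (↾w) := (mono_iff_injective _).2 hw
  Types.isPushout_of_isPullback_of_mono'
    ((Types.isPullback_iff _ _ _ _).2 ⟨by ext k; exact comm k, fun _ _ h => hu h.2, hpb⟩)
    (by ext h; simpa using hsurj h) (fun c c' hc _ => hg c c' hc)

/-! ### Positions of terms -/

theorem List.not_prefix_append_singleton {c q : List ℕ} {i : ℕ} (h : ¬ c <+: q)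
    (hne : q ++ [i] ≠ c) : ¬ c <+: q ++ [i] := by
  rw [List.prefix_concat_iff]
  exact fun h' => h'.elim (fun h'' => hne h''.symm) h

namespace Term

variable {S : Type} {ar : S → ℕ} {X : Type} {u : Term S ar X}

@[simp] theorem sub?_nil (t : Term S ar X) : t.sub? [] = some t := by
  cases t <;> rfl

theorem sub?_app_cons (f : S) (ts : Fin (ar f) → Term S ar X) (i : ℕ) (p : List ℕ) :
    (app f ts).sub? (i :: p) = if h : i < ar f then (ts ⟨i, h⟩).sub? p else none := rfl

theorem sub?_subst (σ : X → Term S ar X) {t s : Term S ar X} {p : List ℕ}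
    (h : t.sub? p = some s) : (t.subst σ).sub? p = some (s.subst σ) := by
  induction p generalizing t with
  | nil => simp_all
  | cons i p ih =>
    cases t with
    | var x => simp [sub?] at h
    | app f ts =>
      rw [sub?_app_cons] at h
      split_ifs at h with hi
      exact (sub?_app_cons f (fun j => (ts j).subst σ) i p).trans (by rw [dif_pos hi]; exact ih h)

theorem isSome_sub?_subst (σ : X → Term S ar X) {t : Term S ar X} {p : List ℕ}
    (h : (t.sub? p).isSome) : ((t.subst σ).sub? p).isSome := by
  obtain ⟨s, hs⟩ := Option.isSome_iff_exists.mp h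
  simp [sub?_subst σ hs]

theorem symAt_subst (σ : X → Term S ar X) {t : Term S ar X} {p : List ℕ} {f : S}
    (h : t.symAt p = some f) : (t.subst σ).symAt p = some f := by
  obtain ⟨ts, hts⟩ := t.symAt_sub h
  rw [symAt, sub?_subst σ hts]
  rfl

theorem isSome_sub?_of_isSome_symAt {t : Term S ar X} {p : List ℕ} (h : (t.symAt p).isSome) :
    (t.sub? p).isSome := by
  rw [symAt] at h
  cases hs : t.sub? p <;> simp_all

theorem isSome_sub?_of_append {t : Term S ar X} {p q : List ℕ} (h : (t.sub? (p ++ q)).isSome) :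
    (t.sub? p).isSome := by
  rw [sub?_append] at h
  cases hs : t.sub? p <;> simp_all

theorem sub?_append_eq_none_of_var {t : Term S ar X} {p q : List ℕ} {x : X}
    (hx : t.sub? p = some (var x)) (hq : q ≠ []) : t.sub? (p ++ q) = none := by
  obtain ⟨i, q, rfl⟩ := List.exists_cons_of_ne_nil hq
  rw [sub?_append, hx]
  rfl

theorem symAt_append_eq_none_of_var {t : Term S ar X} {p : List ℕ} {x : X}
    (hx : t.sub? p = some (var x)) (q : List ℕ) : t.symAt (p ++ q) = none := by
  rcases eq_or_ne q [] with rfl | hq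
  · simp [symAt, hx, head?]
  · simp [symAt, sub?_append_eq_none_of_var hx hq]

theorem var_decomp_unique {t : Term S ar X} {p₁ p₂ q₁ q₂ : List ℕ} {x₁ x₂ : X}
    (h₁ : t.sub? p₁ = some (var x₁)) (h₂ : t.sub? p₂ = some (var x₂))
    (he : p₁ ++ q₁ = p₂ ++ q₂) : p₁ = p₂ ∧ x₁ = x₂ ∧ q₁ = q₂ := by
  have leaf {p p' : List ℕ} {x x' : X} (h : t.sub? p = some (var x))
      (h' : t.sub? p' = some (var x')) (hp : p <+: p') : p = p' := by
    obtain ⟨d, rfl⟩ := hp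
    by_contra hne
    simp [sub?_append_eq_none_of_var h (by simpa using hne)] at h'
  have hp : p₁ = p₂ := by
    rcases List.prefix_or_prefix_of_prefix ⟨q₁, rfl⟩ ⟨q₂, he.symm⟩ with hp | hp
    · exact leaf h₁ h₂ hp
    · exact (leaf h₂ h₁ hp).symm
  subst hp
  rw [h₁] at h₂
  exact ⟨rfl, by simpa using h₂, List.append_cancel_left he⟩

theorem isSome_symAt_or_exists_var (σ : X → Term S ar X) {t : Term S ar X} {q : List ℕ}
    (h : ((t.subst σ).sub? q).isSome) :
    (t.symAt q).isSome ∨ ∃ x p q', q = p ++ q' ∧ t.sub? p = some (var x) := by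
  induction q generalizing t with
  | nil =>
    cases t with
    | var x => exact Or.inr ⟨x, [], [], rfl, rfl⟩
    | app f ts => exact Or.inl rfl
  | cons i q ih =>
    cases t with
    | var x => exact Or.inr ⟨x, [], i :: q, rfl, rfl⟩
    | app f ts =>
      have h' := (sub?_app_cons f (fun j => (ts j).subst σ) i q) ▸ h
      split_ifs at h' with hi
      · rcases ih h' with hs | ⟨x, p, q', rfl, hx⟩
        · left; simpa [symAt, sub?_app_cons, hi] using hs
        · exact Or.inr ⟨x, i :: p, q', rfl, by rw [sub?_app_cons, dif_pos hi, hx]⟩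
      · simp at h'

theorem finite_positions (t : Term S ar X) : {p : List ℕ | (t.sub? p).isSome}.Finite := by
  induction t with
  | var x =>
    refine (Set.finite_singleton []).subset fun p hp => ?_
    cases p with
    | nil => rfl
    | cons i p => simp [sub?] at hp
  | app f ts ih =>
    refine ((Set.finite_iUnion fun i => (ih i).image (List.cons (i : ℕ))).insert []).subset ?_
    rintro (_ | ⟨i, p⟩) hp
    · exact Set.mem_insert _ _
    · simp only [Set.mem_ofPred_eq, sub?_app_cons] at hp
      split_ifs at hp with hi
      · exact Or.inr (Set.mem_iUnion.2 ⟨⟨i, hi⟩, p, hp, rfl⟩)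
      · simp at hp

theorem Linear.choose_eq (hu : u.Linear) {x : X} (h : x ∈ u.vars) {p : List ℕ}
    (hx : u.sub? p = some (.var x)) : h.choose = p :=
  hu x _ p h.choose_spec hx

def label (t : Term S ar X) (p : List ℕ) : FlatL S :=
  (t.symAt p).elim Flat.bot (fun f => Flat.el (Sum.inl f))

/-- The tree encoding of an arbitrary term, with one vertex per position: unlike `Term.enc`,
distinct occurrences of a variable give distinct `⊥`-labeled leaves. -/
noncomputable def posGraph (t : Term S ar X) : LGraph (FlatL S) where
  V := {p : List ℕ // (t.sub? p).isSome}
  E := {pi : List ℕ × ℕ // (t.sub? (pi.1 ++ [pi.2])).isSome}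
  src e := ⟨e.1.1, isSome_sub?_of_append e.2⟩
  tgt e := ⟨e.1.1 ++ [e.1.2], e.2⟩
  lV v := t.label v.1
  lE e := Flat.el (Sum.inr ⟨e.1.2 + 1, Nat.succ_pos _⟩)

theorem finiteG_posGraph (t : Term S ar X) : FiniteG t.posGraph := by
  have : Finite t.posGraph.V := t.finite_positions.to_subtype
  refine ⟨this, Finite.of_injective t.posGraph.tgt fun e e' h => ?_⟩
  obtain ⟨h₁, h₂⟩ := List.append_inj' (congrArg Subtype.val h) rfl
  exact Subtype.ext (Prod.ext h₁ (List.singleton_inj.1 h₂))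

/-- The position of a vertex of `u.enc`; for a variable it is one of its occurrences, the only
one when `u` is linear. -/
noncomputable def encPos (u : Term S ar X) : u.encV → List ℕ
  | .inl p => p.1
  | .inr x => x.2.choose

theorem isSome_sub?_encPos (v : u.encV) : (u.sub? (u.encPos v)).isSome := by
  rcases v with ⟨p, hp⟩ | ⟨x, hx⟩
  · exact isSome_sub?_of_isSome_symAt hp
  · simp [encPos, hx.choose_spec]

theorem encPos_inr (hu : u.Linear) {x : X} {p : List ℕ} (hx : u.sub? p = some (.var x)) :
    u.encPos (.inr ⟨x, p, hx⟩) = p :=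
  hu.choose_eq _ hx

theorem encRoot_of_isSome (h : (u.symAt []).isSome) : u.encRoot = .inl ⟨[], h⟩ :=
  dif_pos h

theorem encTgt_of_isSome {e : u.encE} (h : (u.symAt (e.1.1 ++ [e.1.2])).isSome) :
    u.encTgt e = .inl ⟨_, h⟩ :=
  dif_pos h

theorem encTgt_of_var {e : u.encE} {x : X} (hx : u.sub? (e.1.1 ++ [e.1.2]) = some (.var x)) :
    u.encTgt e = .inr ⟨x, _, hx⟩ := by
  have h : ¬ (u.symAt (e.1.1 ++ [e.1.2])).isSome := by simp [symAt, hx, head?]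
  have hc := (Classical.choose_spec (u.edge_tgt_var e.2 h)).symm.trans hx
  simp only [Option.some.injEq, var.injEq] at hc
  exact (dif_neg h).trans (congrArg Sum.inr (Subtype.ext hc))

theorem encPos_encRoot (hu : u.Linear) : u.encPos u.encRoot = [] := by
  by_cases h : (u.symAt []).isSome
  · rw [encRoot_of_isSome h]; rfl
  · exact (congrArg u.encPos (dif_neg h : u.encRoot = _)).trans
      (encPos_inr hu (Classical.choose_spec (u.root_var h)))

theorem encPos_encTgt (hu : u.Linear) (e : u.encE) : u.encPos (u.encTgt e) = e.1.1 ++ [e.1.2] := by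
  by_cases h : (u.symAt (e.1.1 ++ [e.1.2])).isSome
  · exact congrArg u.encPos (dif_pos h : u.encTgt e = _)
  · exact (congrArg u.encPos (dif_neg h : u.encTgt e = _)).trans
      (encPos_inr hu (Classical.choose_spec (u.edge_tgt_var e.2 h)))

theorem encPos_injective : Function.Injective u.encPos := by
  have var_ne_sym {x : X} (hx : x ∈ u.vars) {p : List ℕ} (hp : (u.symAt p).isSome) :
      hx.choose ≠ p := by
    rintro rfl
    have := symAt_append_eq_none_of_var hx.choose_spec []
    simp_all
  rintro (⟨p, hp⟩ | ⟨x, hx⟩) (⟨p', hp'⟩ | ⟨x', hx'⟩) h <;> dsimp only [encPos] at h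
  · subst h; rfl
  · exact absurd h.symm (var_ne_sym hx' hp)
  · exact absurd h (var_ne_sym hx hp')
  · have := hx.choose_spec
    rw [h, hx'.choose_spec] at this
    obtain rfl : x' = x := by simpa using this
    rfl

theorem encPos_eq_append_of_var {x : X} {p q : List ℕ}
    (hx : u.sub? p = some (.var x)) {v : u.encV} (h : u.encPos v = p ++ q) :
    v = .inr ⟨x, p, hx⟩ ∧ q = [] := by
  rcases v with ⟨p', hp'⟩ | ⟨y, hy⟩
  · simp only [encPos] at h
    subst h
    simp [symAt_append_eq_none_of_var hx] at hp'
  · dsimp only [encPos] at h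
    obtain ⟨-, rfl, rfl⟩ := var_decomp_unique (q₁ := []) hy.choose_spec hx (by simpa using h)
    exact ⟨rfl, rfl⟩

def varHead {u : Term S ar X} {p : List ℕ} {x : X} (hx : u.sub? p = some (.var x)) :
    u.varHeads :=
  ⟨.inr ⟨x, p, hx⟩, ⟨x, p, hx⟩, rfl⟩

end Term

namespace Ctx

variable {S : Type} {ar : S → ℕ} {X : Type}

theorem sub?_fill_holePos_append (C : Ctx S ar X) (a : Term S ar X) (q : List ℕ) :
    (C.fill a).sub? (C.holePos ++ q) = a.sub? q := by
  induction C with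
  | hole => rfl
  | app f i ts D ih =>
    simp only [fill, holePos, List.cons_append, Term.sub?_app_cons, i.isLt, dite_true]
    rw [Fin.eta, Function.update_self, ih]

/-- Away from the hole, the shape of `C.fill a` does not depend on `a`. -/
theorem map_head?_sub?_fill_of_not_prefix (C : Ctx S ar X) (a b : Term S ar X) {q : List ℕ}
    (hq : ¬ C.holePos <+: q) :
    ((C.fill a).sub? q).map Term.head? = ((C.fill b).sub? q).map Term.head? := by
  induction C generalizing q with
  | hole => exact absurd List.nil_prefix hq
  | app f i ts D ih =>
    rcases q with _ | ⟨j, q⟩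
    · rfl
    simp only [fill, Term.sub?_app_cons]
    split_ifs with hj
    · by_cases hji : (⟨j, hj⟩ : Fin (ar f)) = i
      · subst hji
        simp only [Function.update_self]
        exact ih fun h => hq (List.cons_prefix_cons.2 ⟨rfl, h⟩)
      · simp only [Function.update_of_ne hji]
    · rfl

theorem isSome_sub?_fill_of_not_prefix (C : Ctx S ar X) (a b : Term S ar X) {q : List ℕ}
    (hq : ¬ C.holePos <+: q) (h : ((C.fill a).sub? q).isSome) : ((C.fill b).sub? q).isSome := by
  have := congrArg Option.isSome (C.map_head?_sub?_fill_of_not_prefix a b hq)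
  rwa [Option.isSome_map, Option.isSome_map, h, eq_comm] at this

theorem symAt_fill_of_not_prefix (C : Ctx S ar X) (a b : Term S ar X) {q : List ℕ}
    (hq : ¬ C.holePos <+: q) : (C.fill a).symAt q = (C.fill b).symAt q := by
  simpa [Term.symAt, Option.bind_map] using
    congrArg (Option.bind · id) (C.map_head?_sub?_fill_of_not_prefix a b hq)

theorem sub?_fill_subst_of_var (C : Ctx S ar X) (σ : X → Term S ar X) {u : Term S ar X}
    {p : List ℕ} {x : X} (hx : u.sub? p = some (.var x)) (q : List ℕ) :
    (C.fill (u.subst σ)).sub? (C.holePos ++ p ++ q) = (σ x).sub? q := by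
  rw [List.append_assoc, sub?_fill_holePos_append, Term.sub?_append, Term.sub?_subst σ hx]
  rfl

theorem label_fill_subst_of_var (C : Ctx S ar X) (σ : X → Term S ar X) {u : Term S ar X}
    {p : List ℕ} {x : X} (hx : u.sub? p = some (.var x)) (q : List ℕ) :
    (C.fill (u.subst σ)).label (C.holePos ++ p ++ q) = (σ x).label q := by
  simp only [Term.label, Term.symAt, C.sub?_fill_subst_of_var σ hx]

theorem label_fill_subst_of_symAt (C : Ctx S ar X) (σ : X → Term S ar X) {u : Term S ar X}
    {p : List ℕ} (hp : (u.symAt p).isSome) :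
    (C.fill (u.subst σ)).label (C.holePos ++ p) = u.label p := by
  obtain ⟨f, hf⟩ := Option.isSome_iff_exists.1 hp
  have h : (C.fill (u.subst σ)).symAt (C.holePos ++ p) = some f := by
    rw [Term.symAt, sub?_fill_holePos_append]
    exact Term.symAt_subst σ hf
  rw [Term.label, Term.label, h, hf]

theorem label_fill_of_not_prefix (C : Ctx S ar X) (a b : Term S ar X) {q : List ℕ}
    (hq : ¬ C.holePos <+: q) : (C.fill a).label q = (C.fill b).label q := by
  rw [Term.label, Term.label, C.symAt_fill_of_not_prefix a b hq]

theorem isSome_sub?_fill_holePos_append (C : Ctx S ar X) (σ : X → Term S ar X)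
    {u : Term S ar X} {q : List ℕ} (h : (u.sub? q).isSome) :
    ((C.fill (u.subst σ)).sub? (C.holePos ++ q)).isSome := by
  rw [C.sub?_fill_holePos_append]
  exact Term.isSome_sub?_subst σ h

theorem isSome_sub?_fill_holePos (C : Ctx S ar X) (t : Term S ar X) :
    ((C.fill t).sub? C.holePos).isSome := by
  have h := C.sub?_fill_holePos_append t []
  rw [List.append_nil] at h
  simp [h]

end Ctx

namespace Term

variable {S : Type} {ar : S → ℕ} {X : Type} (C : Ctx S ar X) (σ : X → Term S ar X)
  {u : Term S ar X}

theorem exists_symAt_lt_of_isSome_fill {p : List ℕ} {i : ℕ} (hp : (u.symAt p).isSome)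
    (h : ((C.fill (u.subst σ)).sub? (C.holePos ++ p ++ [i])).isSome) :
    ∃ f, u.symAt p = some f ∧ i < ar f := by
  obtain ⟨f, hf⟩ := Option.isSome_iff_exists.mp hp
  obtain ⟨ts, hts⟩ := u.symAt_sub hf
  rw [List.append_assoc, C.sub?_fill_holePos_append, sub?_append, sub?_subst σ hts] at h
  refine ⟨f, hf, ?_⟩
  by_contra hi
  simp [subst, sub?, hi] at h

/-- The match of a linear pattern `u` at the hole of `C[u σ]`. -/
noncomputable def embedding (hu : u.Linear) : u.enc ⟶ (C.fill (u.subst σ)).posGraph where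
  onV v := ⟨C.holePos ++ u.encPos v,
    C.isSome_sub?_fill_holePos_append σ (isSome_sub?_encPos v)⟩
  onE e := ⟨(C.holePos ++ e.1.1, e.1.2), by
    obtain ⟨s, hs⟩ := u.edge_sub?_isSome e.2
    simpa using C.isSome_sub?_fill_holePos_append σ (q := e.1.1 ++ [e.1.2]) (by simp [hs])⟩
  src_comm _ := rfl
  tgt_comm e := Subtype.ext <| (List.append_assoc _ _ _).trans
    (congrArg _ (encPos_encTgt hu e).symm)
  lV_le
    | .inl ⟨p, hp⟩ => (C.label_fill_subst_of_symAt σ hp).ge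
    | .inr _ => Flat.bot_le _
  lE_le _ := le_rfl

variable {C σ}

theorem embedding_val (hu : u.Linear) (v : u.encV) :
    (homV (u.embedding C σ hu) v).1 = C.holePos ++ u.encPos v := rfl

theorem embedding_injective (hu : u.Linear) :
    Function.Injective (homV (u.embedding C σ hu)) := fun _ _ h =>
  encPos_injective (List.append_cancel_left (congrArg Subtype.val h))

theorem embedding_injective_edges (hu : u.Linear) :
    Function.Injective (homE (u.embedding C σ hu)) := fun _ _ h => by
  obtain ⟨h₁, h₂⟩ := Prod.mk.inj (congrArg Subtype.val h)
  exact Subtype.ext (Prod.ext (List.append_cancel_left h₁) h₂)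

end Term

namespace TRSRule

variable {S : Type} {ar : S → ℕ} {X : Type} (ρ : TRSRule S ar X)

theorem isSome_symAt_lhs_nil : (ρ.lhs.symAt []).isSome := by
  cases h : ρ.lhs with
  | var x => exact absurd h (ρ.lhs_not_var x)
  | app f ts => rfl

theorem encRoot_lhs : ρ.lhs.encRoot = .inl ⟨[], ρ.isSome_symAt_lhs_nil⟩ :=
  Term.encRoot_of_isSome _

theorem ne_nil_of_lhs_var {p : List ℕ} {x : X} (hx : ρ.lhs.sub? p = some (.var x)) :
    p ≠ [] := by
  rintro rfl
  exact ρ.lhs_not_var x (by simpa using hx)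

end TRSRule

/-! ### Positions of `C[u σ]` relative to the redex -/

section Classification

variable {S : Type} {ar : S → ℕ} {X : Type}

/-- How a position `q` of `C[u σ]` lies relative to the hole position `c` of `C`: outside the
redex, at a symbol of the pattern `u`, or inside the term substituted for a variable of `u`. -/
inductive PosClass (u : Term S ar X) (c q : List ℕ) : Type
  | outside (h : ¬ c <+: q)
  | pattern (p : List ℕ) (hp : (u.symAt p).isSome) (he : q = c ++ p)
  | subst (x : X) (p q' : List ℕ) (hx : u.sub? p = some (.var x)) (he : q = c ++ p ++ q')

instance (u : Term S ar X) (c q : List ℕ) : Subsingleton (PosClass u c q) := by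
  constructor
  rintro (h | ⟨p, hp, rfl⟩ | ⟨x, p, q', hx, rfl⟩)
    (h' | ⟨p', hp', he'⟩ | ⟨x', p', q'', hx', he'⟩)
  · rfl
  · exact absurd ⟨_, he'.symm⟩ h
  · exact absurd ⟨_, (he'.trans (List.append_assoc _ _ _)).symm⟩ h
  · exact absurd (List.prefix_append _ _) h'
  · obtain rfl := List.append_cancel_left he'
    rfl
  · rw [List.append_assoc] at he'
    obtain rfl := List.append_cancel_left he'
    simp [Term.symAt_append_eq_none_of_var hx'] at hp
  · exact absurd ⟨_, (List.append_assoc _ _ _).symm⟩ h'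
  · rw [List.append_assoc] at he'
    obtain rfl := List.append_cancel_left he'
    simp [Term.symAt_append_eq_none_of_var hx] at hp'
  · rw [List.append_assoc, List.append_assoc] at he'
    obtain ⟨rfl, rfl, rfl⟩ := Term.var_decomp_unique hx hx' (List.append_cancel_left he')
    rfl

end Classification

namespace PosClass

variable {S : Type} {ar : S → ℕ} {X : Type} {u : Term S ar X} {c q : List ℕ}

theorem nonempty_of_isSome {C : Ctx S ar X} {σ : X → Term S ar X} {u : Term S ar X}
    {q : List ℕ} (hq : ((C.fill (u.subst σ)).sub? q).isSome) :
    Nonempty (PosClass u C.holePos q) := by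
  by_cases h : C.holePos <+: q
  · obtain ⟨d, rfl⟩ := h
    rw [C.sub?_fill_holePos_append] at hq
    rcases Term.isSome_symAt_or_exists_var σ hq with hs | ⟨x, p, q', rfl, hx⟩
    · exact ⟨.pattern d hs rfl⟩
    · exact ⟨.subst x p q' hx (List.append_assoc _ _ _).symm⟩
  · exact ⟨.outside h⟩

noncomputable def classify {C : Ctx S ar X} {σ : X → Term S ar X} {u : Term S ar X}
    {q : List ℕ} (hq : ((C.fill (u.subst σ)).sub? q).isSome) : PosClass u C.holePos q :=
  Classical.choice (nonempty_of_isSome hq)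

/-- The vertices of `G_L` that survive in `G_K`. -/
def IsKept (r : Term S ar X) : PosClass u c q → Prop
  | .outside _ => True
  | .pattern p _ _ => p = []
  | .subst x _ _ _ _ => x ∈ r.vars

/-- The edges of `G_L` (classified by their source) that survive in `G_K`. -/
def IsKeptEdge (r : Term S ar X) : PosClass u c q → Prop
  | .outside _ => True
  | .pattern _ _ _ => False
  | .subst x _ _ _ _ => x ∈ r.vars

theorem IsKeptEdge.isKept {r : Term S ar X} {cl : PosClass u c q} (h : cl.IsKeptEdge r) :
    cl.IsKept r := by
  rcases cl with _ | _ | _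
  exacts [trivial, h.elim, h]

theorem IsKeptEdge.isKept_child {ρ : TRSRule S ar X} {i : ℕ} {cl : PosClass ρ.lhs c q}
    (cl' : PosClass ρ.lhs c (q ++ [i]))
    (h : cl.IsKeptEdge ρ.rhs) : cl'.IsKept ρ.rhs := by
  rcases cl with h' | _ | ⟨x, p, q', hx, rfl⟩
  · by_cases hc : q ++ [i] = c
    · rw [Subsingleton.elim cl' (.pattern [] ρ.isSome_symAt_lhs_nil (by simp [hc]))]
      rfl
    · rw [Subsingleton.elim cl' (.outside (List.not_prefix_append_singleton h' hc))]
      trivial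
  · exact h.elim
  · rw [Subsingleton.elim cl' (.subst x p (q' ++ [i]) hx (by simp))]
    exact h

end PosClass

/-! ### The match and its adherence -/

namespace TermStep

open Term PosClass

variable {S : Type} {ar : S → ℕ} {X : Type} (ρ : TRSRule S ar X) (C : Ctx S ar X)
  (σ : X → Term S ar X)

noncomputable def adherenceV {c q : List ℕ} : PosClass ρ.lhs c q → (ruleEnc ρ).L'.V
  | .outside _ => Sum.inr ()
  | .pattern p hp _ => Sum.inl (Sum.inl (Sum.inl ⟨p, hp⟩))
  | .subst x p [] hx _ => Sum.inl (Sum.inl (Sum.inr ⟨x, p, hx⟩))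
  | .subst _ _ (_ :: _) hx _ => Sum.inl (Sum.inr (varHead hx))

noncomputable def adherenceE {q : List ℕ} (i : ℕ)
    (hqi : ((C.fill (ρ.lhs.subst σ)).sub? (q ++ [i])).isSome) :
    PosClass ρ.lhs C.holePos q → (ruleEnc ρ).L'.E
  | .outside _ => Sum.inr (decide (q ++ [i] = C.holePos))
  | .pattern p hp he =>
    Sum.inl (Sum.inl ⟨(p, i), exists_symAt_lt_of_isSome_fill C σ hp (he ▸ hqi)⟩)
  | .subst _ _ [] hx _ => Sum.inl (Sum.inr (Sum.inl (varHead hx)))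
  | .subst _ _ (_ :: _) hx _ => Sum.inl (Sum.inr (Sum.inr (varHead hx)))

variable {ρ C σ}

theorem tgt_adherenceE {q : List ℕ} {i : ℕ}
    (hqi : ((C.fill (ρ.lhs.subst σ)).sub? (q ++ [i])).isSome)
    (cl : PosClass ρ.lhs C.holePos q) (cl' : PosClass ρ.lhs C.holePos (q ++ [i])) :
    (ruleEnc ρ).L'.tgt (adherenceE ρ C σ i hqi cl) = adherenceV ρ cl' := by
  rcases cl with h | ⟨p, hp, rfl⟩ | ⟨x, p, _ | ⟨j, q'⟩, hx, rfl⟩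
  · by_cases hc : q ++ [i] = C.holePos
    · rw [Subsingleton.elim cl' (.pattern [] ρ.isSome_symAt_lhs_nil (by simp [hc]))]
      simp only [adherenceE, hc, decide_true]
      exact congrArg (Sum.inl ∘ Sum.inl) ρ.encRoot_lhs
    · rw [Subsingleton.elim cl' (.outside (List.not_prefix_append_singleton h hc))]
      simp only [adherenceE, hc, decide_false]
      rfl
  · have hpi := exists_symAt_lt_of_isSome_fill C σ hp hqi
    by_cases hs : (ρ.lhs.symAt (p ++ [i])).isSome
    · rw [Subsingleton.elim cl' (.pattern (p ++ [i]) hs (by simp))]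
      exact congrArg (Sum.inl ∘ Sum.inl) (encTgt_of_isSome (e := ⟨(p, i), hpi⟩) hs)
    · obtain ⟨x, hx⟩ := ρ.lhs.edge_tgt_var hpi hs
      rw [Subsingleton.elim cl' (.subst x (p ++ [i]) [] hx (by simp))]
      exact congrArg (Sum.inl ∘ Sum.inl) (encTgt_of_var (e := ⟨(p, i), hpi⟩) hx)
  · rw [Subsingleton.elim cl' (.subst x p [i] hx (by simp))]
    rfl
  · rw [Subsingleton.elim cl' (.subst x p (j :: q' ++ [i]) hx (by simp))]
    rfl

theorem src_adherenceE {q : List ℕ} {i : ℕ}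
    (hqi : ((C.fill (ρ.lhs.subst σ)).sub? (q ++ [i])).isSome)
    (cl : PosClass ρ.lhs C.holePos q) :
    (ruleEnc ρ).L'.src (adherenceE ρ C σ i hqi cl) = adherenceV ρ cl := by
  rcases cl with h | ⟨p, hp, rfl⟩ | ⟨x, p, _ | ⟨j, q'⟩, hx, rfl⟩ <;> rfl

theorem label_le_adherenceV {q : List ℕ} (cl : PosClass ρ.lhs C.holePos q) :
    (C.fill (ρ.lhs.subst σ)).label q ≤ (ruleEnc ρ).L'.lV (adherenceV ρ cl) := by
  rcases cl with h | ⟨p, hp, rfl⟩ | ⟨x, p, _ | ⟨j, q'⟩, hx, rfl⟩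
  · exact Flat.le_top _
  · refine (C.label_fill_subst_of_symAt σ hp).le.trans (le_of_eq ?_)
    refine (if_neg ?_).symm
    rintro ⟨y, hy⟩
    cases hy
  · exact Flat.le_cases (Or.inr (if_pos ⟨⟨x, p, hx⟩, rfl⟩))
  · exact Flat.le_top _

theorem lE_le_adherenceE {q : List ℕ} {i : ℕ}
    (hqi : ((C.fill (ρ.lhs.subst σ)).sub? (q ++ [i])).isSome)
    (cl : PosClass ρ.lhs C.holePos q) :
    (Flat.el (Sum.inr ⟨i + 1, Nat.succ_pos _⟩) : FlatL S) ≤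
      (ruleEnc ρ).L'.lE (adherenceE ρ C σ i hqi cl) := by
  rcases cl with h | ⟨p, hp, rfl⟩ | ⟨x, p, _ | ⟨j, q'⟩, hx, rfl⟩
  · exact Flat.le_top _
  · exact le_rfl
  · exact Flat.le_top _
  · exact Flat.le_top _

variable (ρ C σ)

/-- The adherence morphism `α : G_L → L'`. -/
noncomputable def adherence : (C.fill (ρ.lhs.subst σ)).posGraph ⟶ (ruleEnc ρ).L' where
  onV v := adherenceV ρ (classify v.2)
  onE e := adherenceE ρ C σ e.1.2 e.2 (classify (isSome_sub?_of_append e.2))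
  src_comm e := src_adherenceE e.2 _
  tgt_comm e := tgt_adherenceE e.2 _ _
  lV_le _ := label_le_adherenceV _
  lE_le e := lE_le_adherenceE e.2 _

variable {ρ C σ}

theorem homV_adherence {q : List ℕ} (hq : ((C.fill (ρ.lhs.subst σ)).sub? q).isSome)
    (cl : PosClass ρ.lhs C.holePos q) :
    homV (adherence ρ C σ) ⟨q, hq⟩ = adherenceV ρ cl :=
  congrArg (adherenceV ρ) (Subsingleton.elim _ cl)

theorem homE_adherence {q : List ℕ} {i : ℕ}
    (hqi : ((C.fill (ρ.lhs.subst σ)).sub? (q ++ [i])).isSome)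
    (cl : PosClass ρ.lhs C.holePos q) :
    homE (adherence ρ C σ) ⟨(q, i), hqi⟩ = adherenceE ρ C σ i hqi cl :=
  congrArg (adherenceE ρ C σ i hqi) (Subsingleton.elim _ cl)

theorem embedding_comp_adherence (hl : ρ.lhs.Linear) :
    ρ.lhs.embedding C σ hl ≫ adherence ρ C σ = (ruleEnc ρ).tL := by
  refine LGraph.hom_ext (fun v => ?_) (fun e => ?_)
  · rcases v with ⟨p, hp⟩ | ⟨x, hx⟩
    · exact homV_adherence _ (.pattern p hp rfl)
    · exact homV_adherence _ (.subst x _ [] hx.choose_spec (List.append_nil _).symm)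
  · obtain ⟨f, hf, -⟩ := e.2
    exact homE_adherence _ (.pattern e.1.1 (by simp [hf]) rfl)

theorem isPullback_match (hl : ρ.lhs.Linear) :
    IsPullback (𝟙 (ruleEnc ρ).L) (ρ.lhs.embedding C σ hl) (ruleEnc ρ).tL
      (adherence ρ C σ) := by
  refine LGraph.isPullback_of_components
    (by rw [Category.id_comp]; exact (embedding_comp_adherence hl).symm)
    (fun a ⟨q, hq⟩ h => ⟨a, ⟨rfl, ?_⟩, fun _ h' => h'.1⟩)
    (fun a ⟨⟨q, i⟩, hqi⟩ h => ⟨a, ⟨rfl, ?_⟩, fun _ h' => h'.1⟩)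
    (fun _ _ h _ => h) (fun _ _ h _ => h)
  · obtain ⟨cl⟩ := nonempty_of_isSome hq
    rw [homV_adherence hq cl] at h
    rcases cl with h' | ⟨p, hp, rfl⟩ | ⟨x, p, _ | ⟨j, q'⟩, hx, rfl⟩
    · cases h
    · cases h
      rfl
    · cases h
      exact Subtype.ext ((congrArg (C.holePos ++ ·) (encPos_inr hl hx)).trans (by simp))
    · cases h
  · obtain ⟨cl⟩ : Nonempty (PosClass ρ.lhs C.holePos q) :=
      nonempty_of_isSome (isSome_sub?_of_append hqi)
    rw [homE_adherence hqi cl] at h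
    rcases cl with h' | ⟨p, hp, rfl⟩ | ⟨x, p, _ | ⟨j, q'⟩, hx, rfl⟩
    · cases h
    · cases h
      rfl
    · cases h
    · cases h

/-! ### The pullback `G_K` -/

variable (ρ C σ)

/-- The graph `G_K` of the rewrite step: the kept part of `G_L`, with the root of the redex
relabeled `⊥`, the meet of its label with that of the root of `K'`. -/
noncomputable def graphK : LGraph (FlatL S) where
  V := {v : (C.fill (ρ.lhs.subst σ)).posGraph.V // (classify v.2).IsKept ρ.rhs}
  E := {e : (C.fill (ρ.lhs.subst σ)).posGraph.E //
    (classify (isSome_sub?_of_append e.2)).IsKeptEdge ρ.rhs}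
  src e := ⟨⟨e.1.1.1, isSome_sub?_of_append e.1.2⟩, e.2.isKept⟩
  tgt e := ⟨⟨e.1.1.1 ++ [e.1.1.2], e.1.2⟩, IsKeptEdge.isKept_child _ e.2⟩
  lV v := if v.1.1 = C.holePos then Flat.bot else (C.fill (ρ.lhs.subst σ)).label v.1.1
  lE e := (C.fill (ρ.lhs.subst σ)).posGraph.lE e.1

noncomputable def graphKIncl : graphK ρ C σ ⟶ (C.fill (ρ.lhs.subst σ)).posGraph where
  onV := Subtype.val
  onE := Subtype.val
  src_comm _ := rfl
  tgt_comm _ := rfl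
  lV_le v := by
    dsimp only [graphK]
    split_ifs
    exacts [Flat.bot_le _, le_rfl]
  lE_le _ := le_rfl

def interfaceVar {r : Term S ar X} {x : X} (hx : x ∈ r.vars) : interfaceVars r :=
  ⟨.inl ⟨x, hx⟩, ⟨x, hx⟩, rfl⟩

variable {ρ C σ}

noncomputable def typingV {c q : List ℕ} :
    (cl : PosClass ρ.lhs c q) → cl.IsKept ρ.rhs → (ruleEnc ρ).K'.V
  | .outside _, _ => Sum.inr ()
  | .pattern _ _ _, _ => Sum.inl (Sum.inl (Sum.inr ()))
  | .subst x _ [] _ _, hx => Sum.inl (Sum.inl (Sum.inl ⟨x, hx⟩))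
  | .subst _ _ (_ :: _) _ _, hx => Sum.inl (Sum.inr (interfaceVar hx))

noncomputable def typingE {c q : List ℕ} (i : ℕ) :
    (cl : PosClass ρ.lhs c q) → cl.IsKeptEdge ρ.rhs → (ruleEnc ρ).K'.E
  | .outside _, _ => Sum.inr (decide (q ++ [i] = c))
  | .pattern _ _ _, h => h.elim
  | .subst _ _ [] _ _, hx => Sum.inl (Sum.inr (Sum.inl (interfaceVar hx)))
  | .subst _ _ (_ :: _) _ _, hx => Sum.inl (Sum.inr (Sum.inr (interfaceVar hx)))

theorem src_typingE {c q : List ℕ} {i : ℕ} (cl : PosClass ρ.lhs c q)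
    (h : cl.IsKeptEdge ρ.rhs) :
    (ruleEnc ρ).K'.src (typingE i cl h) = typingV cl h.isKept := by
  rcases cl with _ | _ | ⟨x, p, _ | ⟨j, q'⟩, hx, rfl⟩
  exacts [rfl, h.elim, rfl, rfl]

theorem tgt_typingE {c q : List ℕ} {i : ℕ} (cl : PosClass ρ.lhs c q) (h : cl.IsKeptEdge ρ.rhs)
    (cl' : PosClass ρ.lhs c (q ++ [i])) (h' : cl'.IsKept ρ.rhs) :
    (ruleEnc ρ).K'.tgt (typingE i cl h) = typingV cl' h' := by
  rcases cl with h'' | _ | ⟨x, p, _ | ⟨j, q'⟩, hx, rfl⟩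
  · by_cases hc : q ++ [i] = c
    · obtain rfl := Subsingleton.elim cl' (.pattern [] ρ.isSome_symAt_lhs_nil (by simp [hc]))
      simp only [typingE, hc, decide_true]
      rfl
    · obtain rfl := Subsingleton.elim cl' (.outside (List.not_prefix_append_singleton h'' hc))
      simp only [typingE, hc, decide_false]
      rfl
  · exact h.elim
  · obtain rfl := Subsingleton.elim cl' (.subst x p [i] hx (by simp))
    rfl
  · obtain rfl := Subsingleton.elim cl' (.subst x p (j :: q' ++ [i]) hx (by simp))
    rfl

theorem lV_le_typingV {q : List ℕ} (cl : PosClass ρ.lhs C.holePos q) (h : cl.IsKept ρ.rhs) :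
    (if q = C.holePos then Flat.bot else (C.fill (ρ.lhs.subst σ)).label q) ≤
      (ruleEnc ρ).K'.lV (typingV cl h) := by
  rcases cl with _ | ⟨p, hp, rfl⟩ | ⟨x, p, _ | ⟨j, q'⟩, hx, rfl⟩
  · exact Flat.le_top _
  · obtain rfl : p = [] := h
    simp [Flat.bot_le]
  · exact Flat.le_cases (Or.inr (if_pos ⟨⟨x, h⟩, rfl⟩))
  · exact Flat.le_top _

theorem lE_le_typingE {c q : List ℕ} {i : ℕ} (cl : PosClass ρ.lhs c q)
    (h : cl.IsKeptEdge ρ.rhs) :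
    (Flat.el (Sum.inr ⟨i + 1, Nat.succ_pos _⟩) : FlatL S) ≤
      (ruleEnc ρ).K'.lE (typingE i cl h) := by
  rcases cl with _ | _ | ⟨x, p, _ | ⟨j, q'⟩, hx, rfl⟩
  exacts [Flat.le_top _, h.elim, Flat.le_top _, Flat.le_top _]

variable (ρ C σ)

/-- The morphism `u' : G_K → K'`. -/
noncomputable def graphKTyping : graphK ρ C σ ⟶ (ruleEnc ρ).K' where
  onV v := typingV _ v.2
  onE e := typingE e.1.1.2 _ e.2
  src_comm e := src_typingE _ e.2
  tgt_comm e := tgt_typingE _ e.2 _ _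
  lV_le v := lV_le_typingV _ v.2
  lE_le e := lE_le_typingE _ e.2

variable {ρ C σ}

theorem l'_injective : Function.Injective (homV (ruleEnc ρ).l') := by
  rintro (((⟨x, hx⟩ | ⟨⟩) | ⟨_, ⟨x, hx⟩, rfl⟩) | ⟨⟩)
    (((⟨y, hy⟩ | ⟨⟩) | ⟨_, ⟨y, hy⟩, rfl⟩) | ⟨⟩) h
  all_goals simp only [homV, ruleEnc, encl', mapPrime, ρ.encRoot_lhs] at h
  all_goals cases h <;> rfl

theorem l'_injective_edges : Function.Injective (homE (ruleEnc ρ).l') := by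
  rintro ((⟨⟨⟩⟩ | (⟨_, ⟨x, hx⟩, rfl⟩ | ⟨_, ⟨x, hx⟩, rfl⟩)) | b)
    ((⟨⟨⟩⟩ | (⟨_, ⟨y, hy⟩, rfl⟩ | ⟨_, ⟨y, hy⟩, rfl⟩)) | b') h
  all_goals simp only [homE, ruleEnc, encl', mapPrime] at h
  all_goals cases h <;> rfl

theorem adherenceV_eq_l'_typingV {c q : List ℕ} (cl : PosClass ρ.lhs c q)
    (h : cl.IsKept ρ.rhs) : adherenceV ρ cl = homV (ruleEnc ρ).l' (typingV cl h) := by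
  rcases cl with _ | ⟨p, hp, rfl⟩ | ⟨x, p, _ | ⟨j, q'⟩, hx, rfl⟩
  · rfl
  · obtain rfl : p = [] := h
    exact (congrArg (Sum.inl ∘ Sum.inl) ρ.encRoot_lhs).symm
  · rfl
  · rfl

theorem adherenceE_eq_l'_typingE {q : List ℕ} {i : ℕ}
    (hqi : ((C.fill (ρ.lhs.subst σ)).sub? (q ++ [i])).isSome)
    (cl : PosClass ρ.lhs C.holePos q) (h : cl.IsKeptEdge ρ.rhs) :
    adherenceE ρ C σ i hqi cl = homE (ruleEnc ρ).l' (typingE i cl h) := by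
  rcases cl with _ | _ | ⟨x, p, _ | ⟨j, q'⟩, hx, rfl⟩
  exacts [rfl, h.elim, rfl, rfl]

theorem isKept_of_adherenceV_eq {c q : List ℕ} (cl : PosClass ρ.lhs c q)
    {k : (ruleEnc ρ).K'.V} (h : adherenceV ρ cl = homV (ruleEnc ρ).l' k) : cl.IsKept ρ.rhs := by
  rcases cl with _ | ⟨p, hp, rfl⟩ | ⟨x, p, _ | ⟨j, q'⟩, hx, rfl⟩
  · trivial
  all_goals rcases k with (((⟨y, hy⟩ | ⟨⟩) | ⟨_, ⟨y, hy⟩, rfl⟩) | ⟨⟩)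
  all_goals simp only [homV, ruleEnc, encl', mapPrime, ρ.encRoot_lhs, adherenceV] at h
  all_goals cases h
  all_goals first | rfl | assumption

theorem isKeptEdge_of_adherenceE_eq {q : List ℕ} {i : ℕ}
    (hqi : ((C.fill (ρ.lhs.subst σ)).sub? (q ++ [i])).isSome)
    (cl : PosClass ρ.lhs C.holePos q) {k : (ruleEnc ρ).K'.E}
    (h : adherenceE ρ C σ i hqi cl = homE (ruleEnc ρ).l' k) : cl.IsKeptEdge ρ.rhs := by
  rcases cl with _ | ⟨p, hp, rfl⟩ | ⟨x, p, _ | ⟨j, q'⟩, hx, rfl⟩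
  · trivial
  all_goals
    rcases k with ((⟨⟨⟩⟩ | (⟨_, ⟨y, hy⟩, rfl⟩ | ⟨_, ⟨y, hy⟩, rfl⟩)) | b)
  all_goals simp only [homE, ruleEnc, encl', mapPrime, adherenceE] at h
  all_goals cases h
  all_goals assumption

theorem homV_graphKTyping {q : List ℕ} (hq : ((C.fill (ρ.lhs.subst σ)).sub? q).isSome)
    (hk : (classify hq).IsKept ρ.rhs) (cl : PosClass ρ.lhs C.holePos q) (h : cl.IsKept ρ.rhs) :
    homV (graphKTyping ρ C σ) ⟨⟨q, hq⟩, hk⟩ = typingV cl h := by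
  obtain rfl := Subsingleton.elim (classify hq) cl
  rfl

theorem graphKIncl_comp_adherence :
    graphKIncl ρ C σ ≫ adherence ρ C σ = graphKTyping ρ C σ ≫ (ruleEnc ρ).l' :=
  LGraph.hom_ext (fun v => adherenceV_eq_l'_typingV _ v.2)
    (fun e => adherenceE_eq_l'_typingE e.1.2 _ e.2)

theorem isPullback_graphK :
    IsPullback (graphKIncl ρ C σ) (graphKTyping ρ C σ) (adherence ρ C σ) (ruleEnc ρ).l' := by
  refine LGraph.isPullback_of_components graphKIncl_comp_adherence
    (fun w k h => ?_) (fun e k h => ?_) (fun v l h₁ h₂ => ?_) (fun _ _ h _ => h)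
  · have hk := isKept_of_adherenceV_eq _ h
    exact ⟨⟨w, hk⟩, ⟨rfl, l'_injective ((adherenceV_eq_l'_typingV _ hk).symm.trans h)⟩,
      fun v hv => Subtype.ext hv.1⟩
  · have hk := isKeptEdge_of_adherenceE_eq e.2 _ h
    exact ⟨⟨e, hk⟩,
      ⟨rfl, l'_injective_edges ((adherenceE_eq_l'_typingE e.2 _ hk).symm.trans h)⟩,
      fun v hv => Subtype.ext hv.1⟩
  · obtain ⟨⟨q, hq⟩, hk⟩ := v
    dsimp only [graphK]
    split_ifs with hc
    · subst hc
      rw [homV_graphKTyping hq hk (.pattern [] ρ.isSome_symAt_lhs_nil (List.append_nil _).symm)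
        rfl] at h₂
      exact h₂.trans (le_of_eq (if_neg (by rintro ⟨_, ⟨⟩⟩)))
    · exact h₁

theorem isKept_classify {q : List ℕ} (hq : ((C.fill (ρ.lhs.subst σ)).sub? q).isSome)
    (cl : PosClass ρ.lhs C.holePos q) (h : cl.IsKept ρ.rhs) : (classify hq).IsKept ρ.rhs := by
  rwa [Subsingleton.elim (classify hq) cl]

theorem isKeptEdge_classify {q : List ℕ} (hq : ((C.fill (ρ.lhs.subst σ)).sub? q).isSome)
    (cl : PosClass ρ.lhs C.holePos q) (h : cl.IsKeptEdge ρ.rhs) :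
    (classify hq).IsKeptEdge ρ.rhs := by
  rwa [Subsingleton.elim (classify hq) cl]

variable (ρ C σ)

noncomputable def graphKRoot : (graphK ρ C σ).V :=
  ⟨⟨C.holePos, C.isSome_sub?_fill_holePos _⟩, isKept_classify _
    (.pattern [] ρ.isSome_symAt_lhs_nil (List.append_nil _).symm) rfl⟩

noncomputable def graphKVar {x : X} (hx : x ∈ ρ.rhs.vars) : (graphK ρ C σ).V :=
  ⟨⟨C.holePos ++ ρ.lhs.encPos (.inr ⟨x, ρ.var_cond hx⟩),
    C.isSome_sub?_fill_holePos_append σ (isSome_sub?_encPos _)⟩,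
    isKept_classify _ (.subst x _ [] (ρ.var_cond hx).choose_spec (List.append_nil _).symm) hx⟩

/-- The morphism `u : K → G_K`. -/
noncomputable def interfaceToGraphK : (ruleEnc ρ).K ⟶ graphK ρ C σ where
  onV
    | .inl x => graphKVar ρ C σ x.2
    | .inr _ => graphKRoot ρ C σ
  onE e := e.elim
  src_comm e := e.elim
  tgt_comm e := e.elim
  lV_le _ := Flat.bot_le _
  lE_le e := e.elim

variable {ρ C σ}

theorem interfaceToGraphK_comp_graphKTyping :
    interfaceToGraphK ρ C σ ≫ graphKTyping ρ C σ = (ruleEnc ρ).tK := by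
  refine LGraph.hom_ext (fun v => ?_) (fun e => e.elim)
  rcases v with ⟨x, hx⟩ | ⟨⟩
  · exact homV_graphKTyping _ _ (.subst x _ [] (ρ.var_cond hx).choose_spec
      (List.append_nil _).symm) hx
  · exact homV_graphKTyping _ _ (.pattern [] ρ.isSome_symAt_lhs_nil (List.append_nil _).symm) rfl

theorem interfaceToGraphK_comp_graphKIncl (hl : ρ.lhs.Linear) :
    interfaceToGraphK ρ C σ ≫ graphKIncl ρ C σ =
      (ruleEnc ρ).l ≫ ρ.lhs.embedding C σ hl := by
  refine LGraph.hom_ext (fun v => ?_) (fun e => e.elim)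
  rcases v with _ | ⟨⟩
  · rfl
  · refine Subtype.ext (?_ : C.holePos = C.holePos ++ ρ.lhs.encPos ρ.lhs.encRoot)
    rw [encPos_encRoot hl, List.append_nil]

/-! ### The pushout `G_R` -/

/-- Where `g_R` sends a kept position: the redex root to the hole, and the subterm below the
occurrence of `x` in `lhs` to the occurrence of `x` in `rhs`. -/
noncomputable def rightPos {c q : List ℕ} :
    (cl : PosClass ρ.lhs c q) → cl.IsKept ρ.rhs → List ℕ
  | .outside _, _ => q
  | .pattern _ _ _, _ => c
  | .subst _ _ q' _ _, hx => c ++ hx.choose ++ q'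

theorem isSome_sub?_rightPos {q : List ℕ} (hq : ((C.fill (ρ.lhs.subst σ)).sub? q).isSome)
    (cl : PosClass ρ.lhs C.holePos q) (h : cl.IsKept ρ.rhs) :
    ((C.fill (ρ.rhs.subst σ)).sub? (rightPos cl h)).isSome := by
  rcases cl with h' | _ | ⟨x, p, q', hx, rfl⟩
  · exact C.isSome_sub?_fill_of_not_prefix _ _ h' hq
  · exact C.isSome_sub?_fill_holePos _
  · rw [C.sub?_fill_subst_of_var σ hx] at hq
    rwa [rightPos, C.sub?_fill_subst_of_var σ h.choose_spec]

theorem rightPos_child {c q : List ℕ} {i : ℕ} (cl : PosClass ρ.lhs c q)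
    (h : cl.IsKeptEdge ρ.rhs) (cl' : PosClass ρ.lhs c (q ++ [i])) (h' : cl'.IsKept ρ.rhs) :
    rightPos cl h.isKept ++ [i] = rightPos cl' h' := by
  rcases cl with h'' | _ | ⟨x, p, q', hx, rfl⟩
  · by_cases hc : q ++ [i] = c
    · obtain rfl := Subsingleton.elim cl' (.pattern [] ρ.isSome_symAt_lhs_nil (by simp [hc]))
      exact hc
    · obtain rfl := Subsingleton.elim cl' (.outside (List.not_prefix_append_singleton h'' hc))
      rfl
  · exact h.elim
  · obtain rfl := Subsingleton.elim cl' (.subst x p (q' ++ [i]) hx (by simp))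
    simp [rightPos]

theorem ne_holePos_of_subst {x : X} {p q' : List ℕ} (hx : ρ.lhs.sub? p = some (.var x)) :
    C.holePos ++ p ++ q' ≠ C.holePos := by
  intro h
  have := congrArg List.length h
  simp only [List.length_append] at this
  exact ρ.ne_nil_of_lhs_var hx (List.eq_nil_of_length_eq_zero (by omega))

theorem label_le_rightPos {q : List ℕ} (cl : PosClass ρ.lhs C.holePos q) (h : cl.IsKept ρ.rhs) :
    (if q = C.holePos then Flat.bot else (C.fill (ρ.lhs.subst σ)).label q) ≤
      (C.fill (ρ.rhs.subst σ)).label (rightPos cl h) := by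
  rcases cl with h' | ⟨p, hp, rfl⟩ | ⟨x, p, q', hx, rfl⟩
  · rw [if_neg (fun hc : q = C.holePos => h' (hc ▸ List.prefix_refl _)),
      C.label_fill_of_not_prefix _ (ρ.rhs.subst σ) h']
    rfl
  · obtain rfl : p = [] := h
    exact (if_pos (List.append_nil _)).le.trans (Flat.bot_le _)
  · rw [if_neg (ne_holePos_of_subst hx), rightPos, C.label_fill_subst_of_var σ hx,
      C.label_fill_subst_of_var σ h.choose_spec]

variable (ρ C σ)

/-- The morphism `g_R : G_K → G_R` of the rewrite step. -/
noncomputable def graphKToR : graphK ρ C σ ⟶ (C.fill (ρ.rhs.subst σ)).posGraph where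
  onV v := ⟨rightPos _ v.2, isSome_sub?_rightPos v.1.2 _ v.2⟩
  onE e := ⟨(rightPos _ e.2.isKept, e.1.1.2), by
    rw [rightPos_child _ e.2 (classify e.1.2) (IsKeptEdge.isKept_child _ e.2)]
    exact isSome_sub?_rightPos e.1.2 _ _⟩
  src_comm _ := rfl
  tgt_comm e := Subtype.ext (rightPos_child _ e.2 _ _)
  lV_le v := label_le_rightPos _ v.2
  lE_le _ := le_rfl

variable {ρ C σ}

theorem graphKToR_val {q : List ℕ} (hq : ((C.fill (ρ.lhs.subst σ)).sub? q).isSome)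
    (hk : (classify hq).IsKept ρ.rhs) (cl : PosClass ρ.lhs C.holePos q) (h : cl.IsKept ρ.rhs) :
    (homV (graphKToR ρ C σ) ⟨⟨q, hq⟩, hk⟩).1 = rightPos cl h := by
  obtain rfl := Subsingleton.elim (classify hq) cl
  rfl

theorem graphKToR_edge_val {q : List ℕ} {i : ℕ}
    (hqi : ((C.fill (ρ.lhs.subst σ)).sub? (q ++ [i])).isSome)
    (hk : (classify (isSome_sub?_of_append hqi)).IsKeptEdge ρ.rhs)
    (cl : PosClass ρ.lhs C.holePos q) (h : cl.IsKeptEdge ρ.rhs) :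
    (homE (graphKToR ρ C σ) ⟨⟨(q, i), hqi⟩, hk⟩).1 = (rightPos cl h.isKept, i) := by
  obtain rfl := Subsingleton.elim (classify (isSome_sub?_of_append hqi)) cl
  rfl

theorem r_comp_embedding (hr : ρ.rhs.Linear) :
    (ruleEnc ρ).r ≫ ρ.rhs.embedding C σ hr =
      interfaceToGraphK ρ C σ ≫ graphKToR ρ C σ := by
  refine LGraph.hom_ext (fun v => Subtype.ext ?_) (fun e => e.elim)
  rcases v with ⟨x, hx⟩ | ⟨⟩
  · show C.holePos ++ _ = (homV (graphKToR ρ C σ) (graphKVar ρ C σ hx)).1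
    exact ((graphKToR_val _ _ (.subst x _ [] (ρ.var_cond hx).choose_spec
      (List.append_nil _).symm) hx).trans (List.append_nil _)).symm
  · show C.holePos ++ _ = (homV (graphKToR ρ C σ) (graphKRoot ρ C σ)).1
    refine (congrArg (C.holePos ++ ·) (encPos_encRoot hr)).trans ?_
    exact (List.append_nil _).trans (graphKToR_val _ _
      (.pattern [] ρ.isSome_symAt_lhs_nil (List.append_nil _).symm) rfl).symm

theorem interfaceToGraphK_injective : Function.Injective (homV (interfaceToGraphK ρ C σ)) := by
  have var_ne_root {x : X} (hx : x ∈ ρ.rhs.vars) :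
      homV (interfaceToGraphK ρ C σ) (.inl ⟨x, hx⟩) ≠ graphKRoot ρ C σ := fun h =>
    ρ.ne_nil_of_lhs_var (ρ.var_cond hx).choose_spec
      (List.append_cancel_left ((congrArg (·.1.1) h).trans (List.append_nil _).symm))
  rintro (⟨x, hx⟩ | ⟨⟩) (⟨y, hy⟩ | ⟨⟩) h
  · have := (ρ.lhs.encPos_injective (List.append_cancel_left (congrArg (·.1.1) h)))
    cases this
    rfl
  · exact absurd h (var_ne_root hx)
  · exact absurd h.symm (var_ne_root hy)
  · rfl

theorem exists_of_embedding_eq_graphKToR (hl : ρ.lhs.Linear) (hr : ρ.rhs.Linear)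
    (b : ρ.rhs.encV) (v : (graphK ρ C σ).V)
    (h : homV (ρ.rhs.embedding C σ hr) b = homV (graphKToR ρ C σ) v) :
    ∃ k, homV (ruleEnc ρ).r k = b ∧ homV (interfaceToGraphK ρ C σ) k = v := by
  obtain ⟨⟨q, hq⟩, hk⟩ := v
  obtain ⟨cl⟩ := nonempty_of_isSome hq
  have hcl : cl.IsKept ρ.rhs := Subsingleton.elim (classify hq) cl ▸ hk
  have h' := (congrArg Subtype.val h).trans (graphKToR_val hq hk cl hcl)
  rw [embedding_val] at h'
  rcases cl with h'' | ⟨p, hp, rfl⟩ | ⟨x, p, q', hx, rfl⟩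
  · exact absurd ⟨_, h'⟩ h''
  · obtain rfl : p = [] := hcl
    obtain rfl : b = ρ.rhs.encRoot := encPos_injective
      ((List.append_right_eq_self.1 h').trans (encPos_encRoot hr).symm)
    exact ⟨.inr (), rfl, Subtype.ext (Subtype.ext (List.append_nil _).symm)⟩
  · obtain ⟨rfl, rfl⟩ := encPos_eq_append_of_var hcl.choose_spec
      (List.append_cancel_left (h'.trans (List.append_assoc _ _ _)))
    refine ⟨.inl ⟨x, hcl⟩, rfl, Subtype.ext (Subtype.ext ?_)⟩
    exact (congrArg (C.holePos ++ ·) (hl.choose_eq _ hx)).trans (List.append_nil _).symm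

theorem eq_of_rightPos_eq (hl : ρ.lhs.Linear) {q₁ q₂ : List ℕ}
    (cl₁ : PosClass ρ.lhs C.holePos q₁) (cl₂ : PosClass ρ.lhs C.holePos q₂)
    (h₁ : cl₁.IsKeptEdge ρ.rhs) (h₂ : cl₂.IsKeptEdge ρ.rhs)
    (h : rightPos cl₁ h₁.isKept = rightPos cl₂ h₂.isKept) : q₁ = q₂ := by
  rcases cl₁ with h₁' | _ | ⟨x, p, q', hx, rfl⟩ <;>
    rcases cl₂ with h₂' | _ | ⟨y, p₂, q₂', hy, rfl⟩
  all_goals first | exact h₁.elim | exact h₂.elim | simp only [rightPos] at h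
  · exact h
  · exact absurd ⟨_, (h.trans (List.append_assoc _ _ _)).symm⟩ h₁'
  · exact absurd ⟨_, (List.append_assoc _ _ _).symm.trans h⟩ h₂'
  · have h' := List.append_cancel_left ((List.append_assoc _ _ _).symm.trans
      (h.trans (List.append_assoc _ _ _)))
    obtain ⟨-, rfl, rfl⟩ := var_decomp_unique h₁.choose_spec h₂.choose_spec h'
    rw [hl x p p₂ hx hy]

theorem graphKToR_eq_of_not_mem_range (hl : ρ.lhs.Linear) (v v' : (graphK ρ C σ).V)
    (hv : v ∉ Set.range (homV (interfaceToGraphK ρ C σ)))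
    (h : homV (graphKToR ρ C σ) v = homV (graphKToR ρ C σ) v') : v = v' := by
  obtain ⟨⟨q, hq⟩, hk⟩ := v
  obtain ⟨⟨q₂, hq₂⟩, hk₂⟩ := v'
  obtain ⟨cl⟩ := nonempty_of_isSome hq
  obtain ⟨cl₂⟩ := nonempty_of_isSome hq₂
  have hcl : cl.IsKept ρ.rhs := Subsingleton.elim (classify hq) cl ▸ hk
  have hcl₂ : cl₂.IsKept ρ.rhs := Subsingleton.elim (classify hq₂) cl₂ ▸ hk₂
  have h' := (graphKToR_val hq hk cl hcl).symm.trans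
    ((congrArg Subtype.val h).trans (graphKToR_val hq₂ hk₂ cl₂ hcl₂))
  suffices hcl' : cl.IsKeptEdge ρ.rhs ∧ rightPos cl hcl ≠ C.holePos by
    obtain rfl : q = q₂ := by
      rcases cl₂ with h₂ | _ | ⟨y, p₂, q₂', hy, he⟩
      · exact eq_of_rightPos_eq hl cl (.outside h₂) hcl'.1 trivial h'
      · exact absurd h' hcl'.2
      · exact eq_of_rightPos_eq hl cl (.subst y p₂ q₂' hy he) hcl'.1 hcl₂ h'
    rfl
  rcases cl with h'' | ⟨p, hp, rfl⟩ | ⟨x, p, _ | ⟨j, q'⟩, hx, rfl⟩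
  · exact ⟨trivial, fun hc => h'' (hc ▸ List.prefix_refl _)⟩
  · obtain rfl : p = [] := hcl
    exact absurd ⟨.inr (), Subtype.ext (Subtype.ext (List.append_nil _).symm)⟩ hv
  · refine absurd ⟨.inl ⟨x, hcl⟩, Subtype.ext (Subtype.ext ?_)⟩ hv
    exact (congrArg (C.holePos ++ ·) (hl.choose_eq _ hx)).trans (List.append_nil _).symm
  · refine ⟨hcl, fun hc => ?_⟩
    have := congrArg List.length hc
    simp [rightPos] at this

theorem graphR_vertex_cover (hr : ρ.rhs.Linear) (y : (C.fill (ρ.rhs.subst σ)).posGraph.V) :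
    (∃ b, homV (ρ.rhs.embedding C σ hr) b = y ∧
        (C.fill (ρ.rhs.subst σ)).posGraph.lV y ≤ ρ.rhs.enc.lV b) ∨
      ∃ v, homV (graphKToR ρ C σ) v = y ∧
        (C.fill (ρ.rhs.subst σ)).posGraph.lV y ≤ (graphK ρ C σ).lV v := by
  obtain ⟨q, hq⟩ := y
  obtain ⟨cl⟩ := nonempty_of_isSome hq
  rcases cl with h | ⟨p, hp, rfl⟩ | ⟨x, p, q', hx, rfl⟩
  · have hqs := C.isSome_sub?_fill_of_not_prefix _ (ρ.lhs.subst σ) h hq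
    have hk := isKept_classify hqs (.outside h) trivial
    refine Or.inr ⟨⟨⟨q, hqs⟩, hk⟩,
      Subtype.ext (graphKToR_val hqs hk (.outside h) trivial), ?_⟩
    refine le_of_eq ((C.label_fill_of_not_prefix _ _ h).trans (if_neg ?_).symm)
    exact fun hc => h (hc ▸ List.prefix_refl _)
  · exact Or.inl ⟨.inl ⟨p, hp⟩, rfl, (C.label_fill_subst_of_symAt σ hp).le⟩
  · have hxr : x ∈ ρ.rhs.vars := ⟨p, hx⟩
    have hxl := (ρ.var_cond hxr).choose_spec
    have hqs : ((C.fill (ρ.lhs.subst σ)).sub?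
        (C.holePos ++ (ρ.var_cond hxr).choose ++ q')).isSome := by
      rwa [C.sub?_fill_subst_of_var σ hxl, ← C.sub?_fill_subst_of_var σ hx]
    have hk := isKept_classify hqs (.subst x _ q' hxl rfl) hxr
    refine Or.inr ⟨⟨⟨_, hqs⟩, hk⟩, Subtype.ext ?_, ?_⟩
    · refine (graphKToR_val hqs hk (.subst x _ q' hxl rfl) hxr).trans ?_
      exact congrArg (C.holePos ++ · ++ q') (hr.choose_eq hxr hx)
    · refine le_of_eq ((C.label_fill_subst_of_var σ hx q').trans ?_)
      exact (C.label_fill_subst_of_var σ hxl q').symm.trans (if_neg (ne_holePos_of_subst hxl)).symm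

theorem embedding_edge_ne_graphKToR (hr : ρ.rhs.Linear) (b : ρ.rhs.encE)
    (e : (graphK ρ C σ).E) :
    homE (ρ.rhs.embedding C σ hr) b ≠ homE (graphKToR ρ C σ) e := by
  obtain ⟨⟨⟨q, i⟩, hqi⟩, hk⟩ := e
  obtain ⟨f, hf, -⟩ := b.2
  obtain ⟨cl⟩ : Nonempty (PosClass ρ.lhs C.holePos q) :=
    nonempty_of_isSome (isSome_sub?_of_append hqi)
  have hcl : cl.IsKeptEdge ρ.rhs := Subsingleton.elim (classify _) cl ▸ hk
  intro h
  have h' := (congrArg (·.1.1) h).trans (congrArg Prod.fst (graphKToR_edge_val hqi hk cl hcl))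
  rcases cl with h'' | _ | ⟨x, p, q', hx, rfl⟩
  · exact h'' ⟨_, h'⟩
  · exact hcl.elim
  · have h'' : b.1.1 = hcl.choose ++ q' :=
      List.append_cancel_left (h'.trans (List.append_assoc _ _ _))
    simp [h'', symAt_append_eq_none_of_var hcl.choose_spec] at hf

theorem graphKToR_injective_edges (hl : ρ.lhs.Linear) :
    Function.Injective (homE (graphKToR ρ C σ)) := by
  rintro ⟨⟨⟨q, i⟩, hqi⟩, hk⟩ ⟨⟨⟨q₂, i₂⟩, hqi₂⟩, hk₂⟩ h
  obtain ⟨cl⟩ : Nonempty (PosClass ρ.lhs C.holePos q) :=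
    nonempty_of_isSome (isSome_sub?_of_append hqi)
  obtain ⟨cl₂⟩ : Nonempty (PosClass ρ.lhs C.holePos q₂) :=
    nonempty_of_isSome (isSome_sub?_of_append hqi₂)
  have hcl : cl.IsKeptEdge ρ.rhs := Subsingleton.elim (classify _) cl ▸ hk
  have hcl₂ : cl₂.IsKeptEdge ρ.rhs := Subsingleton.elim (classify _) cl₂ ▸ hk₂
  have h' := (graphKToR_edge_val hqi hk cl hcl).symm.trans
    ((congrArg Subtype.val h).trans (graphKToR_edge_val hqi₂ hk₂ cl₂ hcl₂))
  obtain ⟨h₁, rfl⟩ := Prod.mk.inj h'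
  obtain rfl := eq_of_rightPos_eq hl cl cl₂ hcl hcl₂ h₁
  rfl

theorem graphR_edge_cover (hr : ρ.rhs.Linear) (y : (C.fill (ρ.rhs.subst σ)).posGraph.E) :
    (∃ b, homE (ρ.rhs.embedding C σ hr) b = y ∧
        (C.fill (ρ.rhs.subst σ)).posGraph.lE y ≤ ρ.rhs.enc.lE b) ∨
      ∃ e, homE (graphKToR ρ C σ) e = y ∧
        (C.fill (ρ.rhs.subst σ)).posGraph.lE y ≤ (graphK ρ C σ).lE e := by
  obtain ⟨⟨q, i⟩, hqi⟩ := y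
  obtain ⟨cl⟩ : Nonempty (PosClass ρ.rhs C.holePos q) :=
    nonempty_of_isSome (isSome_sub?_of_append hqi)
  rcases cl with h | ⟨p, hp, rfl⟩ | ⟨x, p, q', hx, rfl⟩
  · have hqs : ((C.fill (ρ.lhs.subst σ)).sub? (q ++ [i])).isSome := by
      by_cases hc : q ++ [i] = C.holePos
      · rw [hc]
        exact C.isSome_sub?_fill_holePos _
      · exact C.isSome_sub?_fill_of_not_prefix _ _ (List.not_prefix_append_singleton h hc) hqi
    have hk := isKeptEdge_classify (isSome_sub?_of_append hqs) (.outside h) trivial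
    exact Or.inr ⟨⟨⟨(q, i), hqs⟩, hk⟩,
      Subtype.ext (graphKToR_edge_val hqs hk (.outside h) trivial), le_rfl⟩
  · exact Or.inl ⟨⟨(p, i), exists_symAt_lt_of_isSome_fill C σ hp hqi⟩, rfl, le_rfl⟩
  · have hxr : x ∈ ρ.rhs.vars := ⟨p, hx⟩
    have hxl := (ρ.var_cond hxr).choose_spec
    have hqs : ((C.fill (ρ.lhs.subst σ)).sub?
        (C.holePos ++ (ρ.var_cond hxr).choose ++ q' ++ [i])).isSome := by
      rw [List.append_assoc _ q', C.sub?_fill_subst_of_var σ hxl]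
      rwa [List.append_assoc _ q', C.sub?_fill_subst_of_var σ hx] at hqi
    have hk := isKeptEdge_classify (isSome_sub?_of_append hqs) (.subst x _ q' hxl rfl) hxr
    refine Or.inr ⟨⟨⟨(_, i), hqs⟩, hk⟩, Subtype.ext ?_, le_rfl⟩
    refine (graphKToR_edge_val hqs hk (.subst x _ q' hxl rfl) hxr).trans ?_
    exact congrArg (C.holePos ++ · ++ q', i) (hr.choose_eq hxr hx)

theorem isPushout_graphR (hl : ρ.lhs.Linear) (hr : ρ.rhs.Linear) :
    IsPushout (ruleEnc ρ).r (interfaceToGraphK ρ C σ) (ρ.rhs.embedding C σ hr)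
      (graphKToR ρ C σ) := by
  have comm := r_comp_embedding (C := C) (σ := σ) hr
  refine LGraph.isPushout_of_components comm ?_ ?_ (graphR_vertex_cover hr) (graphR_edge_cover hr)
  · refine Types.isPushout_ofHom_of_injective (fun k => congrArg (homV · k) comm)
      interfaceToGraphK_injective (embedding_injective hr) (exists_of_embedding_eq_graphKToR hl hr)
      (graphKToR_eq_of_not_mem_range hl) (fun y => ?_)
    rcases graphR_vertex_cover hr y with ⟨b, hb, -⟩ | ⟨v, hv, -⟩
    exacts [Or.inl ⟨b, hb⟩, Or.inr ⟨v, hv⟩]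
  · refine Types.isPushout_ofHom_of_injective (fun k => k.elim) (fun k => k.elim)
      (embedding_injective_edges hr)
      (fun b e h => absurd h (embedding_edge_ne_graphKToR hr b e))
      (fun e e' _ h => graphKToR_injective_edges hl h) (fun y => ?_)
    rcases graphR_edge_cover hr y with ⟨b, hb, -⟩ | ⟨e, he, -⟩
    exacts [Or.inl ⟨b, hb⟩, Or.inr ⟨e, he⟩]

variable (C σ) in
theorem pbpoStep (hρ : ρ.Linear) :
    PBPOStep (ruleEnc ρ) (C.fill (ρ.lhs.subst σ)).posGraph (C.fill (ρ.rhs.subst σ)).posGraph :=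
  ⟨{ m := ρ.lhs.embedding C σ hρ.1
     mono_m := LGraph.mono_of_injective _ (embedding_injective hρ.1)
       (embedding_injective_edges hρ.1)
     α := adherence ρ C σ
     matchPB := isPullback_match hρ.1
     GK := graphK ρ C σ
     gL := graphKIncl ρ C σ
     u' := graphKTyping ρ C σ
     pbK := isPullback_graphK
     u := interfaceToGraphK ρ C σ
     u_u' := interfaceToGraphK_comp_graphKTyping
     u_gL := interfaceToGraphK_comp_graphKIncl hρ.1
     w := ρ.rhs.embedding C σ hρ.2
     gR := graphKToR ρ C σ
     po := isPushout_graphR hρ.1 hρ.2 }⟩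

end TermStep

/-- If the encoded system `R°` of a linear TRS `R` is terminating
on all finite `Σ°`-labeled graphs, then `R` is terminating on terms. -/
theorem statement_7 {S : Type} {ar : S → ℕ} {X : Type}
    (Rs : Set (TRSRule S ar X)) (hlin : ∀ ρ ∈ Rs, ρ.Linear)
    (hterm : ¬ ∃ f : ℕ → LGraph (FlatL S),
      (∀ n, FiniteG (f n)) ∧ ∀ n, SysStep Rs (f n) (f (n + 1))) :
    ¬ ∃ g : ℕ → Term S ar X, ∀ n, TStep Rs (g n) (g (n + 1)) := by
  rintro ⟨g, hg⟩
  refine hterm ⟨fun n => (g n).posGraph, fun n => (g n).finiteG_posGraph, fun n => ?_⟩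
  obtain ⟨ρ, hρ, C, σ, hs, ht⟩ := hg n
  refine ⟨ρ, hρ, ?_⟩
  dsimp only
  rw [hs, ht]
  exact TermStep.pbpoStep C σ (hlin ρ hρ)
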